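/- arXiv:math/0312150 — 10 statements merged into one kernel-verified Lean document; each statement's English description precedes it below -/
import Mathlib

section
/- Let σ₀,…,σ_D be real numbers with σ₀ = 1. Then σ₀,…,σ_D is a pseudo cosine sequence of Γ if and only if (σ₁−1)·Σ_{h=0}^{i} k_h σ_h = (b₁⋯b_i)/(c₁⋯c_i)·(σ_{i+1}−σ_i) for 0 ≤ i ≤ D−1. -/
/-- `σ` is a pseudo cosine sequence: `σ 0 = 1` and
`c_i σ_{i-1} + a_i σ_i + b_i σ_{i+1} = k σ_1 σ_i` for `1 ≤ i ≤ D-1`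
(the case `i = 0` is automatic since `c_0 = 0`, `a_0 = 0`, `b_0 = k`). -/
def IsPCS (D : ℕ) (k : ℝ) (a b c σ : ℕ → ℝ) : Prop :=
  σ 0 = 1 ∧ ∀ i, 1 ≤ i → i ≤ D - 1 →
    c i * σ (i - 1) + a i * σ i + b i * σ (i + 1) = k * σ 1 * σ i

/-- σ₀,…,σ_D with σ₀ = 1 is a pseudo cosine sequence iff
(σ₁−1)·Σ_{h=0}^{i} k_h σ_h = (b₁⋯b_i)/(c₁⋯c_i)·(σ_{i+1}−σ_i) for 0 ≤ i ≤ D−1,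
where k_h = (b₀⋯b_{h−1})/(c₁⋯c_h). -/
theorem pcs_iff_sum (D : ℕ) (hD : 3 ≤ D) (k : ℝ) (a b c : ℕ → ℝ)
    (hk : 0 < k) (hb0 : b 0 = k) (ha0 : a 0 = 0) (hc1 : c 1 = 1)
    (hsum : ∀ i, i ≤ D → c i + a i + b i = k)
    (hapos : ∀ i, i ≤ D → 0 ≤ a i)
    (hbpos : ∀ i, i ≤ D - 1 → 0 < b i)
    (hcpos : ∀ i, 1 ≤ i → i ≤ D → 0 < c i)
    (σ : ℕ → ℝ) (hσ0 : σ 0 = 1) :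
    IsPCS D k a b c σ ↔
      ∀ i, i ≤ D - 1 →
        (σ 1 - 1) * ∑ h ∈ Finset.range (i + 1),
            ((∏ j ∈ Finset.range h, b j) / (∏ j ∈ Finset.range h, c (j + 1))) * σ h
          = (∏ j ∈ Finset.range i, b (j + 1)) / (∏ j ∈ Finset.range i, c (j + 1))
              * (σ (i + 1) - σ i) := by
  have hCp : ∀ i, i ≤ D → (0:ℝ) < ∏ j ∈ Finset.range i, c (j + 1) := by
    intro i hi
    refine Finset.prod_pos fun j hj => hcpos (j + 1) (by omega)
      (by have := Finset.mem_range.mp hj; omega)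
  have hBp : ∀ i, i ≤ D - 1 → (0:ℝ) < ∏ j ∈ Finset.range i, b (j + 1) := by
    intro i hi
    refine Finset.prod_pos fun j hj => hbpos (j + 1)
      (by have := Finset.mem_range.mp hj; omega)
  have step : ∀ n, n + 1 ≤ D - 1 →
      ((σ 1 - 1) * ∑ h ∈ Finset.range (n + 1),
          ((∏ j ∈ Finset.range h, b j) / (∏ j ∈ Finset.range h, c (j + 1))) * σ h
        = (∏ j ∈ Finset.range n, b (j + 1)) / (∏ j ∈ Finset.range n, c (j + 1))
            * (σ (n + 1) - σ n)) →
      ((c (n + 1) * σ n + a (n + 1) * σ (n + 1) + b (n + 1) * σ (n + 2)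
          = k * σ 1 * σ (n + 1)) ↔
        (σ 1 - 1) * ∑ h ∈ Finset.range (n + 2),
            ((∏ j ∈ Finset.range h, b j) / (∏ j ∈ Finset.range h, c (j + 1))) * σ h
          = (∏ j ∈ Finset.range (n + 1), b (j + 1)) / (∏ j ∈ Finset.range (n + 1), c (j + 1))
              * (σ (n + 2) - σ (n + 1))) := by
    intro n hn hId
    have hBn := (hBp n (by omega)).ne'
    have hCn := (hCp n (by omega)).ne'
    have hcn : c (n + 1) ≠ 0 := (hcpos _ (by omega) (by omega)).ne'
    have hbn : b (n + 1) ≠ 0 := (hbpos _ (by omega)).ne'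
    have han : a (n + 1) = k - c (n + 1) - b (n + 1) := by
      have := hsum (n + 1) (by omega); linarith
    rw [Finset.sum_range_succ, Finset.prod_range_succ' (fun j => b j) n,
      Finset.prod_range_succ (fun j => c (j + 1)) n,
      Finset.prod_range_succ (fun j => b (j + 1)) n]
    set B := ∏ j ∈ Finset.range n, b (j + 1) with hB
    set C := ∏ j ∈ Finset.range n, c (j + 1) with hC
    set S := ∑ h ∈ Finset.range (n + 1),
      ((∏ j ∈ Finset.range h, b j) / (∏ j ∈ Finset.range h, c (j + 1))) * σ h with hS
    rw [hb0, han]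
    have hId' : (σ 1 - 1) * S * C = B * (σ (n + 1) - σ n) := by
      field_simp at hId; linarith [hId]
    constructor
    · intro h
      field_simp
      linear_combination (c (n + 1)) * hId' - B * h
    · intro h
      field_simp at h
      have key : (B * (C * c (n + 1))) *
          (c (n + 1) * σ n + (k - c (n + 1) - b (n + 1)) * σ (n + 1) + b (n + 1) * σ (n + 2))
          = (B * (C * c (n + 1))) * (k * σ 1 * σ (n + 1)) := by
        linear_combination (-(C * c (n + 1))) * h + (C * c (n + 1) * c (n + 1)) * hId'
      have hne : (B * (C * c (n + 1))) ≠ 0 := mul_ne_zero hBn (mul_ne_zero hCn hcn)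
      exact mul_left_cancel₀ hne key
  constructor
  · rintro ⟨-, hrec⟩ i hi
    induction i with
    | zero => simp [hσ0]
    | succ n ih =>
      exact (step n hi (ih (by omega))).mp (hrec (n + 1) (by omega) hi)
  · intro h
    refine ⟨hσ0, fun i h1 h2 => ?_⟩
    obtain ⟨n, rfl⟩ : ∃ n, i = n + 1 := ⟨i - 1, by omega⟩
    exact (step n h2 (h n (by omega))).mpr (h (n + 1) h2)
end

section
/- Let σ₀,…,σ_D be the pseudo cosine sequence of Γ for θ = −k. Suppose there exists 1 ≤ i ≤ D−2 with σ_{i−1}+σ_i = 0 and σ_{i+1}+σ_{i+2} = 0. Then a_i = 0, a_{i+1} = 0, and σ_i + σ_{i+1} = 0. -/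
/-- Lemma on the pseudo cosine sequence for θ = −k: if
σ_{i−1}+σ_i = 0 and σ_{i+1}+σ_{i+2} = 0 for some 1 ≤ i ≤ D−2,
then a_i = 0, a_{i+1} = 0 and σ_i + σ_{i+1} = 0. -/
theorem grand_mult (D : ℕ) (hD : 3 ≤ D) (k : ℝ) (a b c : ℕ → ℝ)
    (hk : 0 < k) (hb0 : b 0 = k) (ha0 : a 0 = 0) (hc1 : c 1 = 1)
    (hsum : ∀ i, i ≤ D → c i + a i + b i = k)
    (hapos : ∀ i, i ≤ D → 0 ≤ a i)
    (hbpos : ∀ i, i ≤ D - 1 → 0 < b i)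
    (hcpos : ∀ i, 1 ≤ i → i ≤ D → 0 < c i)
    (σ : ℕ → ℝ) (hσ0 : σ 0 = 1) (hσ1 : k * σ 1 = -k)
    (hrec : ∀ i, 1 ≤ i → i ≤ D - 1 →
      c i * σ (i - 1) + a i * σ i + b i * σ (i + 1) = -k * σ i)
    (i : ℕ) (hi1 : 1 ≤ i) (hi2 : i ≤ D - 2)
    (h1 : σ (i - 1) + σ i = 0) (h2 : σ (i + 1) + σ (i + 2) = 0) :
    a i = 0 ∧ a (i + 1) = 0 ∧ σ i + σ (i + 1) = 0 := by
  have hiD1 : i ≤ D - 1 := by omega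
  have hbi : 0 < b i := hbpos i hiD1
  have hci1 : 0 < c (i+1) := hcpos (i+1) (by omega) (by omega)
  have hai : 0 ≤ a i := hapos i (by omega)
  have hai1 : 0 ≤ a (i+1) := hapos (i+1) (by omega)
  have hsumi := hsum i (by omega)
  have hsumi1 := hsum (i+1) (by omega)
  have e1 := hrec i hi1 hiD1
  have e2 := hrec (i+1) (by omega) (by omega)
  have hm1 : σ (i-1) = - σ i := by linarith
  have hp2 : σ (i+2) = - σ (i+1) := by linarith
  rw [hm1] at e1
  have h11 : i + 1 - 1 = i := rfl
  have h12 : i + 1 + 1 = i + 2 := rfl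
  rw [h11, h12, hp2] at e2
  -- case σ i = 0 : contradiction
  by_cases hσi : σ i = 0
  · exfalso
    have hσip : σ (i+1) = 0 := by
      have hb : b i * σ (i+1) = 0 := by
        rw [hσi] at e1; linarith
      exact (mul_eq_zero.mp hb).resolve_left (ne_of_gt hbi)
    have hzero : ∀ n, n ≤ i → σ (i - n) = 0 ∧ σ (i - n + 1) = 0 := by
      intro n
      induction n with
      | zero =>
        intro _
        constructor
        · simpa using hσi
        · simpa using hσip
      | succ m ih =>
        intro hm
        obtain ⟨ha', hb'⟩ := ih (by omega)
        have hj1 : 1 ≤ i - m := by omega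
        have hjD : i - m ≤ D - 1 := by omega
        have e := hrec (i - m) hj1 hjD
        rw [ha', hb'] at e
        have hcj : 0 < c (i - m) := hcpos _ hj1 (by omega)
        have hm0 : c (i - m) * σ (i - m - 1) = 0 := by linarith
        have hs : σ (i - m - 1) = 0 :=
          (mul_eq_zero.mp hm0).resolve_left (ne_of_gt hcj)
        constructor
        · have hq : i - (m+1) = i - m - 1 := by omega
          rw [hq]; exact hs
        · have hq : i - (m+1) + 1 = i - m := by omega
          rw [hq]; exact ha'
    have := (hzero i le_rfl).1
    rw [Nat.sub_self, hσ0] at this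
    norm_num at this
  · -- main case
    have E1 : b i * σ (i+1) + (2*a i + b i) * σ i = 0 := by
      linear_combination e1 + σ i * hsumi
    have E2 : c (i+1) * σ i + (2*a (i+1) + c (i+1)) * σ (i+1) = 0 := by
      linear_combination e2 + σ (i+1) * hsumi1
    have key : (b i * c (i+1) - (2*a (i+1) + c (i+1)) * (2*a i + b i)) * σ i = 0 := by
      linear_combination b i * E2 - (2*a (i+1) + c (i+1)) * E1
    have keq : b i * c (i+1) - (2*a (i+1) + c (i+1)) * (2*a i + b i) = 0 :=
      (mul_eq_zero.mp key).resolve_right hσi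
    have hz : 4 * (a i * a (i+1)) + 2 * (a (i+1) * b i) + 2 * (a i * c (i+1)) = 0 := by
      linear_combination (-1 : ℝ) * keq
    have t1 : a i * c (i+1) = 0 := by
      linarith [mul_nonneg hai hai1, mul_nonneg hai1 hbi.le, mul_nonneg hai hci1.le]
    have t2 : a (i+1) * b i = 0 := by
      linarith [mul_nonneg hai hai1, mul_nonneg hai1 hbi.le, mul_nonneg hai hci1.le]
    have haiz : a i = 0 :=
      (mul_eq_zero.mp t1).resolve_right (ne_of_gt hci1)
    have hai1z : a (i+1) = 0 :=
      (mul_eq_zero.mp t2).resolve_right (ne_of_gt hbi)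
    refine ⟨haiz, hai1z, ?_⟩
    have hbs : b i * (σ i + σ (i+1)) = 0 := by
      linear_combination E1 - 2 * σ i * haiz
    have hss : σ i + σ (i+1) = 0 :=
      (mul_eq_zero.mp hbs).resolve_left (ne_of_gt hbi)
    linarith
end

section
/- Suppose a_i = 0 for 0 ≤ i ≤ D−1. Then for every θ ∈ ℝ, the pair of pseudo cosine sequences for θ and for −k is tight: the pointwise product sequence is again a pseudo cosine sequence. Moreover, if θ, θ′ ∈ ℝ with θ ≠ k, θ′ ≠ k form a tight pair, then θ = −k or θ′ = −k. -/
/-- The pair of real numbers θ, θ' is tight: the entrywise product of their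
pseudo cosine sequences is again a pseudo cosine sequence (recall θ = k·σ₁). -/
def Tight (D : ℕ) (k : ℝ) (a b c : ℕ → ℝ) (θ θ' : ℝ) : Prop :=
  ∀ σ ρ : ℕ → ℝ,
    IsPCS D k a b c σ → k * σ 1 = θ →
    IsPCS D k a b c ρ → k * ρ 1 = θ' →
    IsPCS D k a b c (fun i => σ i * ρ i)

/-- An explicit pseudo cosine sequence with prescribed first cosine `s`. -/
noncomputable def pcsSeq (k : ℝ) (a b c : ℕ → ℝ) (s : ℝ) : ℕ → ℝ
  | 0 => 1
  | 1 => s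
  | (i+2) => (k * s * pcsSeq k a b c s (i+1) - c (i+1) * pcsSeq k a b c s i
      - a (i+1) * pcsSeq k a b c s (i+1)) / b (i+1)

/-- Suppose a_i = 0 for 0 ≤ i ≤ D−1.  Then for every θ the pair θ, −k is
tight; and any tight pair θ, θ' with θ ≠ k, θ' ≠ k has θ = −k or θ' = −k. -/
theorem bipartite_tight_pairs (D : ℕ) (hD : 3 ≤ D) (k : ℝ) (a b c : ℕ → ℝ)
    (hk : 0 < k) (hb0 : b 0 = k) (ha0 : a 0 = 0) (hc1 : c 1 = 1)
    (hsum : ∀ i, i ≤ D → c i + a i + b i = k)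
    (hapos : ∀ i, i ≤ D → 0 ≤ a i)
    (hbpos : ∀ i, i ≤ D - 1 → 0 < b i)
    (hcpos : ∀ i, 1 ≤ i → i ≤ D → 0 < c i)
    (ha' : ∀ i, i ≤ D - 1 → a i = 0) :
    (∀ θ : ℝ, Tight D k a b c θ (-k)) ∧
    (∀ θ θ' : ℝ, θ ≠ k → θ' ≠ k → Tight D k a b c θ θ' → θ = -k ∨ θ' = -k) := by
  have hk0 : k ≠ 0 := ne_of_gt hk
  constructor
  · -- Part 1: (θ, -k) is always tight.
    intro θ σ ρ hσ hθ hρ hρk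
    have hρ1 : ρ 1 = -1 := by
      have h : k * ρ 1 = k * (-1) := by linarith
      exact mul_left_cancel₀ hk0 h
    have main : ∀ i, i + 1 ≤ D → ρ i = (-1)^i ∧ ρ (i+1) = (-1)^(i+1) := by
      intro i
      induction i with
      | zero => intro _; exact ⟨by simpa using hρ.1, by simpa using hρ1⟩
      | succ j ih =>
        intro hj
        obtain ⟨h1, h2⟩ := ih (by omega)
        refine ⟨h2, ?_⟩
        have hrec := hρ.2 (j+1) (by omega) (by omega)
        simp only [Nat.add_sub_cancel] at hrec
        rw [h1, h2, hρ1] at hrec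
        have haj : a (j+1) = 0 := ha' (j+1) (by omega)
        have hsumj := hsum (j+1) (by omega)
        rw [haj] at hrec hsumj
        have hbj : b (j+1) ≠ 0 := ne_of_gt (hbpos (j+1) (by omega))
        have hb2 : b (j+1) * ρ (j+1+1) = b (j+1) * (-1)^(j+1+1) := by
          linear_combination hrec - (-1:ℝ)^j * hsumj
        exact mul_left_cancel₀ hbj hb2
    have key : ∀ i, i ≤ D → ρ i = (-1)^i := by
      intro i hi
      cases i with
      | zero => simpa using hρ.1
      | succ j => exact (main j hi).2
    refine ⟨?_, ?_⟩
    · show σ 0 * ρ 0 = 1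
      rw [hσ.1, hρ.1, mul_one]
    · intro i h1 h2
      obtain ⟨j, rfl⟩ : ∃ j, i = j + 1 := ⟨i - 1, by omega⟩
      simp only [Nat.add_sub_cancel]
      have e := hσ.2 (j+1) (by omega) h2
      simp only [Nat.add_sub_cancel] at e
      have haj : a (j+1) = 0 := ha' (j+1) h2
      rw [haj] at e
      have r0 := key j (by omega)
      have r1 := key (j+1) (by omega)
      have r2 := key (j+1+1) (by omega)
      show c (j+1) * (σ j * ρ j) + a (j+1) * (σ (j+1) * ρ (j+1))
          + b (j+1) * (σ (j+1+1) * ρ (j+1+1)) = k * (σ 1 * ρ 1) * (σ (j+1) * ρ (j+1))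
      rw [haj, r0, r1, r2, hρ1]
      linear_combination ((-1:ℝ)^j) * e
  · -- Part 2
    intro θ θ' hθk hθ'k ht
    have seqPCS : ∀ s : ℝ, IsPCS D k a b c (pcsSeq k a b c s) := by
      intro s
      refine ⟨rfl, ?_⟩
      intro i h1 h2
      obtain ⟨j, rfl⟩ : ∃ j, i = j + 1 := ⟨i - 1, by omega⟩
      have hbj : b (j+1) ≠ 0 := ne_of_gt (hbpos _ h2)
      simp only [Nat.add_sub_cancel]
      rw [show pcsSeq k a b c s (j+1+1) = (k * s * pcsSeq k a b c s (j+1)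
          - c (j+1) * pcsSeq k a b c s j - a (j+1) * pcsSeq k a b c s (j+1)) / b (j+1)
        from by rw [pcsSeq],
        show pcsSeq k a b c s 1 = s from rfl]
      field_simp
      ring
    have hσ := seqPCS (θ / k)
    have hρ' := seqPCS (θ' / k)
    have hθeq : k * pcsSeq k a b c (θ / k) 1 = θ := by
      show k * (θ / k) = θ; field_simp
    have hθ'eq : k * pcsSeq k a b c (θ' / k) 1 = θ' := by
      show k * (θ' / k) = θ'; field_simp
    have hτ := ht _ _ hσ hθeq hρ' hθ'eq
    have ha1 : a 1 = 0 := ha' 1 (by omega)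
    have ha2 : a 2 = 0 := ha' 2 (by omega)
    have hb1 : b 1 = k - 1 := by
      have := hsum 1 (by omega); rw [ha1, hc1] at this; linarith
    have hc2 : c 2 + b 2 = k := by
      have := hsum 2 (by omega); rw [ha2] at this; linarith
    have hc2pos : c 2 ≠ 0 := ne_of_gt (hcpos 2 (by omega) (by omega))
    set S1 := pcsSeq k a b c (θ / k) 1 with hS1
    set S2 := pcsSeq k a b c (θ / k) 2 with hS2
    set S3 := pcsSeq k a b c (θ / k) 3 with hS3
    set R1 := pcsSeq k a b c (θ' / k) 1 with hR1
    set R2 := pcsSeq k a b c (θ' / k) 2 with hR2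
    set R3 := pcsSeq k a b c (θ' / k) 3 with hR3
    have E1 := hσ.2 1 (by omega) (by omega)
    have E2 := hρ'.2 1 (by omega) (by omega)
    have E3 := hτ.2 1 (by omega) (by omega)
    have E4 := hσ.2 2 (by omega) (by omega)
    have E5 := hρ'.2 2 (by omega) (by omega)
    have E6 := hτ.2 2 (by omega) (by omega)
    simp only [show (1:ℕ) - 1 = 0 from rfl, show (2:ℕ) - 1 = 1 from rfl,
      show (1:ℕ) + 1 = 2 from rfl, show (2:ℕ) + 1 = 3 from rfl] at E1 E2 E3 E4 E5 E6
    rw [hσ.1, hc1, ha1] at E1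
    rw [hρ'.1, hc1, ha1] at E2
    rw [hσ.1, hρ'.1, hc1, ha1] at E3
    rw [ha2] at E4 E5 E6
    rw [← hS1, ← hS2] at E1
    rw [← hR1, ← hR2] at E2
    rw [← hS1, ← hS2, ← hR1, ← hR2] at E3
    rw [← hS1, ← hS2, ← hS3] at E4
    rw [← hR1, ← hR2, ← hR3] at E5
    rw [← hS1, ← hS2, ← hS3, ← hR1, ← hR2, ← hR3] at E6
    -- Key identity: S1 * R1 * (k * c 2 * ((S2 - 1) * (R2 - 1))) = 0
    have h4 : b 2 * S3 = S1 * (k * S2 - c 2) := by linear_combination E4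
    have h5 : b 2 * R3 = R1 * (k * R2 - c 2) := by linear_combination E5
    have hmul : (b 2 * S3) * (b 2 * R3) = (S1 * (k * S2 - c 2)) * (R1 * (k * R2 - c 2)) := by
      rw [h4, h5]
    have keyid : S1 * R1 * (k * c 2 * ((S2 - 1) * (R2 - 1))) = 0 := by
      linear_combination b 2 * E6 - hmul + (S1 * R1 * (k * (S2 * R2) - c 2)) * hc2
    have doneS : S2 = 1 → θ = -k := by
      intro h
      have hS1ne : S1 ≠ 1 := by
        intro hh; exact hθk (by rw [← hθeq, hh, mul_one])
      rw [h, hb1] at E1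
      have hq : (S1 - 1) * (S1 + 1) = 0 := by
        have hq' : k * ((S1 - 1) * (S1 + 1)) = k * 0 := by linear_combination -E1
        exact mul_left_cancel₀ hk0 hq'
      rcases mul_eq_zero.1 hq with h' | h'
      · exact absurd (by linarith) hS1ne
      · have hs : S1 = -1 := by linarith
        rw [← hθeq, hs]; ring
    have doneR : R2 = 1 → θ' = -k := by
      intro h
      have hR1ne : R1 ≠ 1 := by
        intro hh; exact hθ'k (by rw [← hθ'eq, hh, mul_one])
      rw [h, hb1] at E2
      have hq : (R1 - 1) * (R1 + 1) = 0 := by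
        have hq' : k * ((R1 - 1) * (R1 + 1)) = k * 0 := by linear_combination -E2
        exact mul_left_cancel₀ hk0 hq'
      rcases mul_eq_zero.1 hq with h' | h'
      · exact absurd (by linarith) hR1ne
      · have hs : R1 = -1 := by linarith
        rw [← hθ'eq, hs]; ring
    rcases mul_eq_zero.1 keyid with h | h
    · rcases mul_eq_zero.1 h with h0 | h0
      · -- S1 = 0 forces R2 = 1
        rw [h0] at E1 E3
        have hbs : b 1 * S2 = -1 := by linear_combination E1
        have hz : b 1 * S2 * (R2 - 1) = 0 := by linear_combination E3 - E1
        rw [hbs] at hz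
        exact Or.inr (doneR (by linarith))
      · -- R1 = 0 forces S2 = 1
        rw [h0] at E2 E3
        have hbs : b 1 * R2 = -1 := by linear_combination E2
        have hz : b 1 * R2 * (S2 - 1) = 0 := by linear_combination E3 - E2
        rw [hbs] at hz
        exact Or.inl (doneS (by linarith))
    · rcases mul_eq_zero.1 h with h0 | h0
      · rcases mul_eq_zero.1 h0 with h1 | h1
        · exact absurd h1 hk0
        · exact absurd h1 hc2pos
      · rcases mul_eq_zero.1 h0 with h1 | h1
        · exact Or.inl (doneS (by linarith))
        · exact Or.inr (doneR (by linarith))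
end

section
/- Let σ₀,…,σ_D and ρ₀,…,ρ_D be nontrivial pseudo cosine sequences of Γ. They form a tight pair if and only if there exists ε ∈ ℝ such that σ_iρ_i − σ_{i−1}ρ_{i−1} = ε(σ_{i−1}ρ_i − σ_iρ_{i−1}) for all 1 ≤ i ≤ D. -/
/-- Nontrivial pseudo cosine sequences σ, ρ form a tight pair iff there exists
ε ∈ ℝ with σ_iρ_i − σ_{i−1}ρ_{i−1} = ε(σ_{i−1}ρ_i − σ_iρ_{i−1}) for 1 ≤ i ≤ D. -/
theorem tight_iff_aux_param (D : ℕ) (hD : 3 ≤ D) (k : ℝ) (a b c : ℕ → ℝ)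
    (hk : 0 < k) (hb0 : b 0 = k) (ha0 : a 0 = 0) (hc1 : c 1 = 1)
    (hsum : ∀ i, i ≤ D → c i + a i + b i = k)
    (hapos : ∀ i, i ≤ D → 0 ≤ a i)
    (hbpos : ∀ i, i ≤ D - 1 → 0 < b i)
    (hcpos : ∀ i, 1 ≤ i → i ≤ D → 0 < c i)
    (σ ρ : ℕ → ℝ)
    (hσ : IsPCS D k a b c σ) (hρ : IsPCS D k a b c ρ)
    (hσnt : σ 1 ≠ 1) (hρnt : ρ 1 ≠ 1) :
    IsPCS D k a b c (fun i => σ i * ρ i) ↔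
      ∃ ε : ℝ, ∀ i, 1 ≤ i → i ≤ D →
        σ i * ρ i - σ (i - 1) * ρ (i - 1)
          = ε * (σ (i - 1) * ρ i - σ i * ρ (i - 1)) := by
  obtain ⟨hσ0, hσr⟩ := hσ
  obtain ⟨hρ0, hρr⟩ := hρ
  constructor
  · rintro ⟨hP0, hPr⟩
    by_cases hone : σ 1 * ρ 1 = 1
    · -- case σ₁ρ₁ = 1 : the products σᵢρᵢ are constantly 1, take ε = 0
      have key : ∀ i, i ≤ D → σ i * ρ i = 1 := by
        intro i
        induction i using Nat.strong_induction_on with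
        | _ i ih =>
          rcases i with _ | _ | j
          · intro _; rw [hσ0, hρ0]; norm_num
          · intro _; exact hone
          · intro hiD
            have hj : σ j * ρ j = 1 := ih j (by omega) (by omega)
            have hj1 : σ (j+1) * ρ (j+1) = 1 := ih (j+1) (by omega) (by omega)
            have hb := hbpos (j+1) (by omega)
            have hs := hsum (j+1) (by omega)
            have e : c (j+1) * (σ j * ρ j) + a (j+1) * (σ (j+1) * ρ (j+1))
                + b (j+1) * (σ (j+2) * ρ (j+2))
                = k * (σ 1 * ρ 1) * (σ (j+1) * ρ (j+1)) :=
              hPr (j+1) (by omega) (by omega)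
            have h0 : b (j+1) * (σ (j+2) * ρ (j+2)) = b (j+1) * 1 := by
              linear_combination e - c (j+1) * hj - a (j+1) * hj1
                + k * (σ 1 * ρ 1) * hj1 + k * hone - hs
            exact mul_left_cancel₀ (ne_of_gt hb) h0
      refine ⟨0, fun i h1 h2 => ?_⟩
      rw [key i h2, key (i-1) (by omega)]
      ring
    · by_cases hne : σ 1 = ρ 1
      · -- impossible case : σ₁ = ρ₁ but σ₁ρ₁ ≠ 1
        exfalso
        have hb1 : 0 < b 1 := hbpos 1 (by omega)
        have hs1 := hsum 1 (by omega)
        rw [hc1] at hs1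
        have eσ1 : c 1 * σ 0 + a 1 * σ 1 + b 1 * σ 2 = k * σ 1 * σ 1 :=
          hσr 1 le_rfl (by omega)
        have eρ1 : c 1 * ρ 0 + a 1 * ρ 1 + b 1 * ρ 2 = k * ρ 1 * ρ 1 :=
          hρr 1 le_rfl (by omega)
        have eP1 : c 1 * (σ 0 * ρ 0) + a 1 * (σ 1 * ρ 1) + b 1 * (σ 2 * ρ 2)
            = k * (σ 1 * ρ 1) * (σ 1 * ρ 1) := hPr 1 le_rfl (by omega)
        rw [hσ0] at eσ1 eP1
        rw [hρ0] at eρ1 eP1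
        rw [hc1] at eσ1 eρ1 eP1
        rw [← hne] at eρ1 eP1 hone
        have hρ2 : ρ 2 = σ 2 := by
          apply mul_left_cancel₀ (ne_of_gt hb1)
          linarith [eσ1, eρ1]
        rw [hρ2] at eP1
        have key : (σ 1 - 1)^2 * (k*(σ 1 + 1)^2 + a 1*(k*σ 1^2 - 1)) = 0 := by
          linear_combination (-(b 1 * σ 2 + (k * σ 1 * σ 1 - 1 - a 1 * σ 1))) * eσ1
            + b 1 * eP1 + (k * σ 1^4 - 1 - a 1 * σ 1^2) * hs1
        have hx1 : σ 1 - 1 ≠ 0 := sub_ne_zero.mpr hσnt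
        have key2 : k*(σ 1 + 1)^2 + a 1*(k*σ 1^2 - 1) = 0 := by
          rcases mul_eq_zero.mp key with h | h
          · exact absurd ((pow_eq_zero_iff (by norm_num)).mp h) hx1
          · exact h
        have hxm1 : σ 1 ≠ -1 := fun h => hone (by rw [h]; norm_num)
        have h0 : σ 1 + 1 ≠ 0 := fun h => hxm1 (by linarith)
        have hp : 0 < (σ 1 + 1)^2 :=
          lt_of_le_of_ne (sq_nonneg _) (Ne.symm (pow_ne_zero 2 h0))
        have ha1 : 0 ≤ a 1 := hapos 1 (by omega)
        have hAt : a 1 * (1 - k*σ 1^2) = k*(σ 1 + 1)^2 := by linear_combination -key2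
        have hBt : b 1 * (1 - k*σ 1^2) = -(1 + k*σ 1)^2 := by
          linear_combination (1 - k*σ 1^2) * hs1 + key2
        have ht : 0 < 1 - k * σ 1^2 := by
          by_contra hcon
          push_neg at hcon
          nlinarith [mul_nonneg ha1 (neg_nonneg.mpr hcon), mul_pos hk hp]
        nlinarith [mul_pos hb1 ht, sq_nonneg (1 + k*σ 1)]
      · -- main case : σ₁ ≠ ρ₁, take ε = (1 - σ₁ρ₁)/(σ₁ - ρ₁)
        have hd : σ 1 - ρ 1 ≠ 0 := sub_ne_zero.mpr hne
        refine ⟨(1 - σ 1 * ρ 1) / (σ 1 - ρ 1), ?_⟩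
        intro i h1
        induction i, h1 using Nat.le_induction with
        | base =>
          intro _
          simp only [Nat.sub_self, hσ0, hρ0]
          linear_combination div_mul_cancel₀ (1 - σ 1 * ρ 1) hd
        | succ n hn ih =>
          intro hle
          have ihh := ih (by omega)
          have eσ := hσr n hn (by omega)
          have eρ := hρr n hn (by omega)
          have eP : c n * (σ (n-1) * ρ (n-1)) + a n * (σ n * ρ n)
              + b n * (σ (n+1) * ρ (n+1)) = k * (σ 1 * ρ 1) * (σ n * ρ n) :=
            hPr n hn (by omega)
          have hs := hsum n (by omega)
          have hb := hbpos n (by omega)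
          have keyε := div_mul_cancel₀ (1 - σ 1 * ρ 1) hd
          simp only [Nat.add_sub_cancel]
          have h0 : b n * ((σ (n+1) * ρ (n+1) - σ n * ρ n)
              - (1 - σ 1 * ρ 1) / (σ 1 - ρ 1) * (σ n * ρ (n+1) - σ (n+1) * ρ n)) = 0 := by
            linear_combination eP - (σ n * ρ n) * hs
              + ((1 - σ 1 * ρ 1) / (σ 1 - ρ 1)) * (ρ n * eσ - σ n * eρ)
              + c n * ihh + k * (σ n * ρ n) * keyε
          have h1' := (mul_eq_zero.mp h0).resolve_left (ne_of_gt hb)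
          linear_combination h1'
  · rintro ⟨ε, hε⟩
    refine ⟨?_, ?_⟩
    · show σ 0 * ρ 0 = 1
      rw [hσ0, hρ0]; norm_num
    · intro j h1 h2
      have eσ := hσr j h1 h2
      have eρ := hρr j h1 h2
      have hs := hsum j (by omega)
      have gj := hε j h1 (by omega)
      have gj1 := hε (j+1) (by omega) (by omega)
      simp only [Nat.add_sub_cancel] at gj1
      have keyH := hε 1 le_rfl (by omega)
      simp only [Nat.sub_self, hσ0, hρ0] at keyH
      show c j * (σ (j-1) * ρ (j-1)) + a j * (σ j * ρ j) + b j * (σ (j+1) * ρ (j+1))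
          = k * (σ 1 * ρ 1) * (σ j * ρ j)
      linear_combination b j * gj1 + (σ j * ρ j) * hs - ε * (ρ j * eσ - σ j * eρ)
        - c j * gj - k * (σ j * ρ j) * keyH
end

section
/- Suppose Γ is neither bipartite nor almost bipartite, and σ₀,…,σ_D and ρ₀,…,ρ_D are nontrivial pseudo cosine sequences forming a tight pair with auxiliary parameter ε = 1. Then: (i) ρ_i = (−1)^i for 0 ≤ i ≤ D−1 and ρ_D ≠ (−1)^D; (ii) σ_{D−1} = σ_D; (iii) a_i = 0 for 0 ≤ i ≤ D−2 and a_{D−1} ≠ 0. -/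
/-- Γ neither bipartite nor almost bipartite; σ, ρ nontrivial pseudo cosine
sequences forming a tight pair with auxiliary parameter ε = 1.  Then
ρ_i = (−1)^i for 0 ≤ i ≤ D−1, ρ_D ≠ (−1)^D, σ_{D−1} = σ_D,
a_i = 0 for 0 ≤ i ≤ D−2 and a_{D−1} ≠ 0. -/
theorem aux_param_one (D : ℕ) (hD : 3 ≤ D) (k : ℝ) (a b c : ℕ → ℝ)
    (hk : 0 < k) (hb0 : b 0 = k) (ha0 : a 0 = 0) (hc1 : c 1 = 1)
    (hsum : ∀ i, i ≤ D → c i + a i + b i = k)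
    (hapos : ∀ i, i ≤ D → 0 ≤ a i)
    (hbpos : ∀ i, i ≤ D - 1 → 0 < b i)
    (hcpos : ∀ i, 1 ≤ i → i ≤ D → 0 < c i)
    (hr : ∃ r, r ≤ D - 1 ∧ a r ≠ 0)
    (σ ρ : ℕ → ℝ)
    (hσ : IsPCS D k a b c σ) (hρ : IsPCS D k a b c ρ)
    (hσnt : σ 1 ≠ 1) (hρnt : ρ 1 ≠ 1)
    (heps : ∀ i, 1 ≤ i → i ≤ D →
      σ i * ρ i - σ (i - 1) * ρ (i - 1)
        = 1 * (σ (i - 1) * ρ i - σ i * ρ (i - 1))) :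
    (∀ i, i ≤ D - 1 → ρ i = (-1 : ℝ) ^ i) ∧ ρ D ≠ (-1 : ℝ) ^ D ∧
    σ (D - 1) = σ D ∧
    (∀ i, i ≤ D - 2 → a i = 0) ∧ a (D - 1) ≠ 0 := by
  obtain ⟨hσ0, hσrec⟩ := hσ
  obtain ⟨hρ0, hρrec⟩ := hρ
  have key : ∀ i, 1 ≤ i → i ≤ D → (σ i - σ (i-1)) * (ρ i + ρ (i-1)) = 0 := by
    intro i h1 h2
    linear_combination heps i h1 h2
  -- zero propagation for σ
  have zero : ∀ i, i ≤ D - 1 → σ i = 0 → σ (i+1) = 0 → False := by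
    intro i
    induction i with
    | zero => intro _ h _; rw [hσ0] at h; norm_num at h
    | succ n ih =>
      intro hle h1 h2
      have hrec := hσrec (n+1) (by omega) hle
      have hc := hcpos (n+1) (by omega) (by omega)
      rw [show n+1-1 = n from rfl, h1, h2] at hrec
      have hσn : σ n = 0 := by
        have : c (n+1) * σ n = 0 := by linarith
        exact (mul_eq_zero.mp this).resolve_left (ne_of_gt hc)
      exact ih (by omega) hσn h1
  -- main claim
  have hC : ∀ j, j ≤ D - 1 → ρ j = (-1 : ℝ) ^ j := by
    intro j
    induction j using Nat.strong_induction_on with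
    | _ j ih =>
      match j, ih with
      | 0, _ => intro _; simpa using hρ0
      | 1, _ =>
        intro h1D
        by_contra hne
        have hk1 := key 1 (by omega) (by omega)
        rw [show (1:ℕ)-1 = 0 from rfl, hσ0, hρ0] at hk1
        have hρ1 : ρ 1 + 1 ≠ 0 := by
          intro h
          exact hne (by rw [pow_one]; linarith)
        have : σ 1 - 1 = 0 := by
          rcases mul_eq_zero.mp hk1 with h | h
          · exact h
          · exact absurd h hρ1
        exact hσnt (by linarith)
      | (m+2), ih =>
        intro hjD
        by_contra hne
        set s : ℝ := (-1 : ℝ) ^ m with hs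
        have hs2 : s * s = 1 := by
          rw [hs, ← pow_add, show m + m = 2*m by omega, pow_mul]; norm_num
        have hsne : s ≠ 0 := by
          intro h; rw [h] at hs2; norm_num at hs2
        have hpow1 : (-1 : ℝ) ^ (m+1) = -s := by rw [pow_succ, hs]; ring
        have hpow2 : (-1 : ℝ) ^ (m+2) = s := by
          rw [pow_add, hs]; norm_num
        have h0 : ρ m = s := by rw [hs]; exact ih m (by omega) (by omega)
        have h1 : ρ (m+1) = -s := by rw [← hpow1]; exact ih (m+1) (by omega) (by omega)
        have hρ1 : ρ 1 = -1 := by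
          have := ih 1 (by omega) (by omega); rw [this]; norm_num
        have hts : ρ (m+2) ≠ s := by rw [← hpow2]; exact hne
        -- σ (m+2) = σ (m+1)
        have hE : σ (m+2) = σ (m+1) := by
          have hk2 := key (m+2) (by omega) (by omega)
          rw [show m+2-1 = m+1 from rfl] at hk2
          have hρne : ρ (m+2) + ρ (m+1) ≠ 0 := by
            rw [h1]; intro h; exact hts (by linarith)
          have := (mul_eq_zero.mp hk2).resolve_right hρne
          linarith
        -- eq1 from ρ recurrence at m+1
        have hrec1 := hρrec (m+1) (by omega) (by omega)
        rw [show m+1-1 = m from rfl, h0, h1, hρ1] at hrec1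
        have hsum1 := hsum (m+1) (by omega)
        have eq1 : b (m+1) * ρ (m+2) = s * (2 * a (m+1) + b (m+1)) := by
          linear_combination hrec1 - s * hsum1
        -- σ (m+3) ≠ σ (m+2)
        have hEfail : σ (m+3) ≠ σ (m+2) := by
          intro he
          have hrec := hσrec (m+2) (by omega) (by omega)
          rw [show m+2-1 = m+1 from rfl, ← hE, he] at hrec
          have hsum2 := hsum (m+2) (by omega)
          have hz : k * σ (m+2) * (σ 1 - 1) = 0 := by
            linear_combination hsum2 * σ (m+2) - hrec
          have hσz : σ (m+2) = 0 := by
            rcases mul_eq_zero.mp hz with h | h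
            · rcases mul_eq_zero.mp h with h' | h'
              · exact absurd h' (ne_of_gt hk)
              · exact h'
            · exact absurd (by linarith : σ 1 = 1) hσnt
          exact zero (m+2) (by omega) hσz (by rw [he]; exact hσz)
        -- ρ (m+3) = - ρ (m+2)
        have hF : ρ (m+3) = -ρ (m+2) := by
          have hk3 := key (m+3) (by omega) (by omega)
          rw [show m+3-1 = m+2 from rfl] at hk3
          have hσne : σ (m+3) - σ (m+2) ≠ 0 := fun h => hEfail (by linarith)
          have := (mul_eq_zero.mp hk3).resolve_left hσne
          linarith
        -- eq2 from ρ recurrence at m+2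
        have hrec2 := hρrec (m+2) (by omega) (by omega)
        rw [show m+2-1 = m+1 from rfl, h1, hρ1, hF] at hrec2
        have hsum2 := hsum (m+2) (by omega)
        have eq2 : (c (m+2) + 2 * a (m+2)) * ρ (m+2) = c (m+2) * s := by
          linear_combination hrec2 + ρ (m+2) * hsum2
        -- combine
        have key2 : s * (2 * a (m+1) * c (m+2) + 2 * a (m+2) * b (m+1)
            + 4 * a (m+1) * a (m+2)) = 0 := by
          linear_combination b (m+1) * eq2 - (c (m+2) + 2 * a (m+2)) * eq1
        have hz2 : 2 * a (m+1) * c (m+2) + 2 * a (m+2) * b (m+1)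
            + 4 * a (m+1) * a (m+2) = 0 :=
          (mul_eq_zero.mp key2).resolve_left hsne
        have ha1 : 0 ≤ a (m+1) := hapos (m+1) (by omega)
        have ha2 : 0 ≤ a (m+2) := hapos (m+2) (by omega)
        have hc2 : 0 < c (m+2) := hcpos (m+2) (by omega) (by omega)
        have hb1 : 0 < b (m+1) := hbpos (m+1) (by omega)
        have ha1z : a (m+1) = 0 := by nlinarith
        apply hts
        have : b (m+1) * ρ (m+2) = s * b (m+1) := by rw [eq1, ha1z]; ring
        have := mul_left_cancel₀ (ne_of_gt hb1) (by linarith [this] :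
          b (m+1) * ρ (m+2) = b (m+1) * s)
        exact this
  -- consequences
  have hD1 : D - 1 = (D - 2) + 1 := by omega
  have hA : ∀ i, i ≤ D - 2 → a i = 0 := by
    intro i hi
    rcases Nat.eq_zero_or_pos i with rfl | hi1
    · exact ha0
    · obtain ⟨m, rfl⟩ : ∃ m, i = m + 1 := ⟨i - 1, by omega⟩
      have hrec := hρrec (m+1) (by omega) (by omega)
      have h0 : ρ m = (-1:ℝ)^m := hC m (by omega)
      have h1 : ρ (m+1) = (-1:ℝ)^(m+1) := hC (m+1) (by omega)
      have h2 : ρ (m+2) = (-1:ℝ)^(m+2) := hC (m+2) (by omega)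
      have hρ1 : ρ 1 = -1 := by
        have := hC 1 (by omega); rw [this]; norm_num
      rw [show m+1-1 = m from rfl, h0, h1, h2, hρ1] at hrec
      have hsum1 := hsum (m+1) (by omega)
      have hs2 : ((-1:ℝ)^m) * ((-1:ℝ)^m) = 1 := by
        rw [← pow_add, show m + m = 2*m by omega, pow_mul]; norm_num
      have hz : ((-1:ℝ)^m) * (2 * a (m+1)) = 0 := by
        have hp1 : (-1:ℝ)^(m+1) = -((-1:ℝ)^m) := by rw [pow_succ]; ring
        have hp2 : (-1:ℝ)^(m+2) = (-1:ℝ)^m := by rw [pow_add]; norm_num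
        rw [hp1, hp2] at hrec
        linear_combination hsum1 * ((-1:ℝ)^m) - hrec
      have hsne : ((-1:ℝ)^m) ≠ 0 := by
        intro h; rw [h] at hs2; norm_num at hs2
      have := (mul_eq_zero.mp hz).resolve_left hsne
      linarith
  have haD1 : a (D - 1) ≠ 0 := by
    obtain ⟨r, hr1, hr2⟩ := hr
    rcases Nat.lt_or_ge r (D-1) with h | h
    · exact absurd (hA r (by omega)) hr2
    · have : r = D - 1 := by omega
      rwa [← this]
  -- ρ D ≠ (-1)^D
  obtain ⟨m, rfl⟩ : ∃ m, D = m + 2 := ⟨D - 2, by omega⟩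
  have h0 : ρ m = (-1:ℝ)^m := hC m (by omega)
  have h1 : ρ (m+1) = (-1:ℝ)^(m+1) := hC (m+1) (by omega)
  have hρ1 : ρ 1 = -1 := by
    have := hC 1 (by omega); rw [this]; norm_num
  have hs2 : ((-1:ℝ)^m) * ((-1:ℝ)^m) = 1 := by
    rw [← pow_add, show m + m = 2*m by omega, pow_mul]; norm_num
  have hsne : ((-1:ℝ)^m) ≠ 0 := by
    intro h; rw [h] at hs2; norm_num at hs2
  have hp1 : (-1:ℝ)^(m+1) = -((-1:ℝ)^m) := by rw [pow_succ]; ring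
  have hp2 : (-1:ℝ)^(m+2) = (-1:ℝ)^m := by rw [pow_add]; norm_num
  have hrec := hρrec (m+1) (by omega) (by omega)
  rw [show m+1-1 = m from rfl, h0, h1, hρ1, hp1] at hrec
  have hsum1 := hsum (m+1) (by omega)
  have haD1' : a (m+1) ≠ 0 := by simpa using haD1
  have haD1pos : 0 < a (m+1) := lt_of_le_of_ne (hapos (m+1) (by omega)) (Ne.symm haD1')
  have hb1 : 0 < b (m+1) := hbpos (m+1) (by omega)
  have hρD : ρ (m+2) ≠ (-1:ℝ)^(m+2) := by
    intro h
    rw [h, hp2] at hrec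
    have : ((-1:ℝ)^m) * (2 * a (m+1)) = 0 := by
      linear_combination hsum1 * ((-1:ℝ)^m) - hrec
    have := (mul_eq_zero.mp this).resolve_left hsne
    linarith
  refine ⟨hC, hρD, ?_, hA, haD1⟩
  -- σ (D-1) = σ D
  have hkD := key (m+2) (by omega) (by omega)
  rw [show m+2-1 = m+1 from rfl] at hkD
  have hρne : ρ (m+2) + ρ (m+1) ≠ 0 := by
    rw [h1, hp1]; intro h
    exact hρD (by rw [hp2]; linarith)
  have := (mul_eq_zero.mp hkD).resolve_right hρne
  have hσeq : σ (m+2) = σ (m+1) := by linarith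
  simpa using hσeq.symm
end

section
/- Let σ₀,…,σ_D and ρ₀,…,ρ_D be nontrivial pseudo cosine sequences forming a tight pair with auxiliary parameter ε ∉ {1, −1}. Then σ_{i−1} ≠ σ_i and ρ_{i−1} ≠ ρ_i for all 1 ≤ i ≤ D. -/
/-- σ, ρ nontrivial pseudo cosine sequences forming a tight pair with auxiliary
parameter ε ∉ {1,−1}.  Then σ_{i−1} ≠ σ_i and ρ_{i−1} ≠ ρ_i for 1 ≤ i ≤ D. -/
theorem no_consecutive_equal (D : ℕ) (hD : 3 ≤ D) (k : ℝ) (a b c : ℕ → ℝ)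
    (hk : 0 < k) (hb0 : b 0 = k) (ha0 : a 0 = 0) (hc1 : c 1 = 1)
    (hsum : ∀ i, i ≤ D → c i + a i + b i = k)
    (hapos : ∀ i, i ≤ D → 0 ≤ a i)
    (hbpos : ∀ i, i ≤ D - 1 → 0 < b i)
    (hcpos : ∀ i, 1 ≤ i → i ≤ D → 0 < c i)
    (hck : ∀ i, 1 ≤ i → i ≤ D → c i < k)
    (σ ρ : ℕ → ℝ) (ε : ℝ)
    (hσ : IsPCS D k a b c σ) (hρ : IsPCS D k a b c ρ)
    (hσnt : σ 1 ≠ 1) (hρnt : ρ 1 ≠ 1)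
    (heps : ∀ i, 1 ≤ i → i ≤ D →
      σ i * ρ i - σ (i - 1) * ρ (i - 1)
        = ε * (σ (i - 1) * ρ i - σ i * ρ (i - 1)))
    (hε1 : ε ≠ 1) (hε2 : ε ≠ -1) :
    ∀ i, 1 ≤ i → i ≤ D → σ (i - 1) ≠ σ i ∧ ρ (i - 1) ≠ ρ i := by
  obtain ⟨hσ0, hσrec⟩ := hσ
  obtain ⟨hρ0, hρrec⟩ := hρ
  -- zero propagation: two consecutive zeros force τ 0 = 0, contradiction
  have zp : ∀ (τ : ℕ → ℝ), τ 0 = 1 →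
      (∀ j, 1 ≤ j → j ≤ D - 1 →
        c j * τ (j - 1) + a j * τ j + b j * τ (j + 1) = k * τ 1 * τ j) →
      ∀ i, 1 ≤ i → i ≤ D → τ (i - 1) = 0 → τ i = 0 → False := by
    intro τ hτ0 hrec i hi1 hiD h0 h1
    have key : ∀ m, m ≤ i - 1 → τ (i - 1 - m) = 0 ∧ τ (i - m) = 0 := by
      intro m
      induction m with
      | zero =>
        intro _
        simp only [Nat.sub_zero]
        exact ⟨h0, h1⟩
      | succ n ih =>
        intro hm
        obtain ⟨hA, hB⟩ := ih (by omega)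
        have hj1 : 1 ≤ i - 1 - n := by omega
        have hr := hrec (i - 1 - n) hj1 (by omega)
        have e1 : i - 1 - n + 1 = i - n := by omega
        rw [e1, hA, hB] at hr
        have hz : τ (i - 1 - n - 1) = 0 := by
          have hcc : c (i - 1 - n) * τ (i - 1 - n - 1) = 0 := by
            linear_combination hr
          exact (mul_eq_zero.mp hcc).resolve_left
            (ne_of_gt (hcpos _ hj1 (by omega)))
        constructor
        · have e2 : i - 1 - (n + 1) = i - 1 - n - 1 := by omega
          rw [e2]; exact hz
        · have e3 : i - (n + 1) = i - 1 - n := by omega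
          rw [e3]; exact hA
    have hfin := (key (i - 1) le_rfl).1
    rw [Nat.sub_self, hτ0] at hfin
    exact one_ne_zero hfin
  have hu0 : k * σ 1 - k ≠ 0 := by
    intro h
    have h' : k * (σ 1 - 1) = 0 := by linear_combination h
    rcases mul_eq_zero.mp h' with h'' | h''
    · exact hk.ne' h''
    · exact hσnt (by linarith)
  have hv0 : k * ρ 1 - k ≠ 0 := by
    intro h
    have h' : k * (ρ 1 - 1) = 0 := by linear_combination h
    rcases mul_eq_zero.mp h' with h'' | h''
    · exact hk.ne' h''
    · exact hρnt (by linarith)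
  -- tight at 1
  have H0 := heps 1 (by norm_num) (by omega)
  norm_num at H0
  rw [hσ0, hρ0] at H0
  have E0 : k * ((k * σ 1 - k) + (k * ρ 1 - k)) + (k * σ 1 - k) * (k * ρ 1 - k)
      = ε * (k * ((k * ρ 1 - k) - (k * σ 1 - k))) := by
    linear_combination k ^ 2 * H0
  -- the hard case: both sequences constant and nonzero at step i
  have hard : ∀ i, 2 ≤ i → i ≤ D → σ (i - 1) = σ i → ρ (i - 1) = ρ i → False := by
    intro i hi2 hiD hσe hρe
    by_cases hs : σ i = 0
    · exact zp σ hσ0 hσrec i (by omega) hiD (hσe.trans hs) hs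
    by_cases hr : ρ i = 0
    · exact zp ρ hρ0 hρrec i (by omega) hiD (hρe.trans hr) hr
    have hj1 : 1 ≤ i - 1 := by omega
    have hjD : i - 1 ≤ D - 1 := by omega
    have hrecσ := hσrec (i - 1) hj1 hjD
    have hrecρ := hρrec (i - 1) hj1 hjD
    have e1 : i - 1 + 1 = i := by omega
    rw [e1, hσe] at hrecσ
    rw [e1, hρe] at hrecρ
    have hsumi := hsum (i - 1) (by omega)
    have h1 : c (i - 1) * σ (i - 1 - 1) = (c (i - 1) + (k * σ 1 - k)) * σ i := by
      linear_combination hrecσ - σ i * hsumi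
    have h2 : c (i - 1) * ρ (i - 1 - 1) = (c (i - 1) + (k * ρ 1 - k)) * ρ i := by
      linear_combination hrecρ - ρ i * hsumi
    have Ht := heps (i - 1) hj1 (by omega)
    rw [hσe, hρe] at Ht
    have E1 : (c (i - 1) * ((k * σ 1 - k) + (k * ρ 1 - k))
          + (k * σ 1 - k) * (k * ρ 1 - k)) * (σ i * ρ i)
        = (ε * (c (i - 1) * ((k * ρ 1 - k) - (k * σ 1 - k)))) * (σ i * ρ i) := by
      linear_combination (-(c (i - 1)) ^ 2) * Ht
        - (c (i - 1) * ρ (i - 1 - 1) + ε * c (i - 1) * ρ i) * h1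
        - ((c (i - 1) + (k * σ 1 - k)) - ε * c (i - 1)) * σ i * h2
    have E1' : c (i - 1) * ((k * σ 1 - k) + (k * ρ 1 - k))
          + (k * σ 1 - k) * (k * ρ 1 - k)
        = ε * (c (i - 1) * ((k * ρ 1 - k) - (k * σ 1 - k))) :=
      mul_right_cancel₀ (mul_ne_zero hs hr) E1
    have hzero : (k * σ 1 - k) * (k * ρ 1 - k) * (c (i - 1) - k) = 0 := by
      linear_combination c (i - 1) * E0 - k * E1'
    have hcK : c (i - 1) - k ≠ 0 :=
      sub_ne_zero.mpr (ne_of_lt (hck (i - 1) hj1 (by omega)))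
    rcases mul_eq_zero.mp hzero with h | h
    · rcases mul_eq_zero.mp h with h' | h'
      · exact hu0 h'
      · exact hv0 h'
    · exact hcK h
  -- main claims
  have claim1 : ∀ i, 1 ≤ i → i ≤ D → σ (i - 1) = σ i → False := by
    intro i hi1 hiD hσe
    by_cases hi : i = 1
    · subst hi
      norm_num at hσe
      exact hσnt (by rw [← hσe, hσ0])
    have hi2 : 2 ≤ i := by omega
    have Ht := heps i hi1 hiD
    rw [hσe] at Ht
    have key : σ i * ((ρ i - ρ (i - 1)) * (1 - ε)) = 0 := by
      linear_combination Ht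
    rcases mul_eq_zero.mp key with hs | key2
    · exact zp σ hσ0 hσrec i hi1 hiD (hσe.trans hs) hs
    rcases mul_eq_zero.mp key2 with hd | hε
    · exact hard i hi2 hiD hσe (by linarith)
    · exact hε1 (by linarith)
  have claim2 : ∀ i, 1 ≤ i → i ≤ D → ρ (i - 1) = ρ i → False := by
    intro i hi1 hiD hρe
    by_cases hi : i = 1
    · subst hi
      norm_num at hρe
      exact hρnt (by rw [← hρe, hρ0])
    have Ht := heps i hi1 hiD
    rw [hρe] at Ht
    have key : ρ i * ((σ i - σ (i - 1)) * (1 + ε)) = 0 := by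
      linear_combination Ht
    rcases mul_eq_zero.mp key with hr | key2
    · exact zp ρ hρ0 hρrec i hi1 hiD (hρe.trans hr) hr
    rcases mul_eq_zero.mp key2 with hd | hε
    · exact claim1 i hi1 hiD (by linarith)
    · exact hε2 (by linarith)
  intro i hi1 hiD
  exact ⟨fun h => claim1 i hi1 hiD h, fun h => claim2 i hi1 hiD h⟩
end

section
/- Suppose a₁ ≠ 0 and let σ₀,…,σ_D and ρ₀,…,ρ_D be nontrivial pseudo cosine sequences forming a tight pair with auxiliary parameter ε. Then ε ∉ {1, −1}, and σ_{i−1} ≠ σ_i, ρ_{i−1} ≠ ρ_i for 1 ≤ i ≤ D. -/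
/-- If a₁ ≠ 0 and σ, ρ are nontrivial pseudo cosine sequences forming a tight
pair with auxiliary parameter ε, then ε ∉ {1,−1}, and σ_{i−1} ≠ σ_i,
ρ_{i−1} ≠ ρ_i for 1 ≤ i ≤ D. -/
theorem aux_param_good (D : ℕ) (hD : 3 ≤ D) (k : ℝ) (a b c : ℕ → ℝ)
    (hk : 0 < k) (hb0 : b 0 = k) (ha0 : a 0 = 0) (hc1 : c 1 = 1)
    (hsum : ∀ i, i ≤ D → c i + a i + b i = k)
    (hapos : ∀ i, i ≤ D → 0 ≤ a i)
    (hbpos : ∀ i, i ≤ D - 1 → 0 < b i)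
    (hcpos : ∀ i, 1 ≤ i → i ≤ D → 0 < c i)
    (hck : ∀ i, 1 ≤ i → i ≤ D → c i < k)
    (ha1 : a 1 ≠ 0)
    (σ ρ : ℕ → ℝ) (ε : ℝ)
    (hσ : IsPCS D k a b c σ) (hρ : IsPCS D k a b c ρ)
    (hσnt : σ 1 ≠ 1) (hρnt : ρ 1 ≠ 1)
    (heps : ∀ i, 1 ≤ i → i ≤ D →
      σ i * ρ i - σ (i - 1) * ρ (i - 1)
        = ε * (σ (i - 1) * ρ i - σ i * ρ (i - 1))) :
    ε ≠ 1 ∧ ε ≠ -1 ∧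
    ∀ i, 1 ≤ i → i ≤ D → σ (i - 1) ≠ σ i ∧ ρ (i - 1) ≠ ρ i := by
  obtain ⟨hσ0, hσrec⟩ := hσ
  obtain ⟨hρ0, hρrec⟩ := hρ
  have hb1 : 0 < b 1 := hbpos 1 (by omega)
  have ha1p : 0 < a 1 := lt_of_le_of_ne (hapos 1 (by omega)) (Ne.symm ha1)
  have hk1 : 1 + a 1 + b 1 = k := by have := hsum 1 (by omega); rw [hc1] at this; linarith
  have hsum2 := hsum 2 (by omega)
  have hc2 := hcpos 2 (by omega) (by omega)
  have ha2 := hapos 2 (by omega)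
  have hT1 : σ 1 * ρ 1 - 1 = ε * (ρ 1 - σ 1) := by
    have h := heps 1 (by omega) (by omega)
    rw [show (1:ℕ) - 1 = 0 from rfl, hσ0, hρ0] at h
    linear_combination h
  -- ε ≠ 1
  have hε1 : ε ≠ 1 := by
    intro h; subst h
    have hρ1 : ρ 1 = -1 := by
      rcases mul_eq_zero.mp (show (σ 1 - 1) * (ρ 1 + 1) = 0 by linear_combination hT1)
        with h' | h'
      · exact absurd (by linarith) hσnt
      · linarith
    have hR1 := hρrec 1 (by omega) (by omega)
    rw [show (1:ℕ) - 1 = 0 from rfl, hρ0, hc1, hρ1] at hR1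
    -- hR1 : 1 * 1 + a 1 * (-1) + b 1 * ρ 2 = k * (-1) * (-1)
    have hρ2 : b 1 * ρ 2 = b 1 + 2 * a 1 := by linear_combination hR1 - hk1
    have hρ2gt : 1 < ρ 2 := by nlinarith
    have h2 := heps 2 (by omega) (by omega)
    rw [show (2:ℕ) - 1 = 1 from rfl] at h2
    have hσ2 : σ 2 = σ 1 := by
      rcases mul_eq_zero.mp (show (σ 2 - σ 1) * (ρ 2 + ρ 1) = 0 by linear_combination h2)
        with h' | h'
      · linarith
      · rw [hρ1] at h'; linarith
    have h3 := heps 3 (by omega) (by omega)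
    rw [show (3:ℕ) - 1 = 2 from rfl] at h3
    rcases mul_eq_zero.mp (show (σ 3 - σ 2) * (ρ 3 + ρ 2) = 0 by linear_combination h3)
      with h' | h'
    · have hS2 := hσrec 2 (by omega) (by omega)
      rw [show (2:ℕ) - 1 = 1 from rfl] at hS2
      have hS1 := hσrec 1 (by omega) (by omega)
      rw [show (1:ℕ) - 1 = 0 from rfl, hσ0, hc1] at hS1
      have hσ3 : σ 3 = σ 1 := by rw [hσ2] at h'; linarith
      rw [hσ3, hσ2] at hS2
      rw [hσ2] at hS1
      exact hσnt (by linear_combination -hS1 + hS2 - σ 1 * hsum2 + σ 1 * hk1)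
    · have hR2 := hρrec 2 (by omega) (by omega)
      rw [show (2:ℕ) - 1 = 1 from rfl] at hR2
      have hρ3 : ρ 3 = -ρ 2 := by linarith
      rw [hρ1, hρ3] at hR2
      nlinarith [hR2, hsum2,
        mul_pos (show (0:ℝ) < 2 * a 2 + c 2 by linarith)
          (show (0:ℝ) < ρ 2 - 1 by linarith)]
  -- ε ≠ -1
  have hε2 : ε ≠ -1 := by
    intro h; subst h
    have hσ1 : σ 1 = -1 := by
      rcases mul_eq_zero.mp (show (σ 1 + 1) * (ρ 1 - 1) = 0 by linear_combination hT1)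
        with h' | h'
      · linarith
      · exact absurd (by linarith) hρnt
    have hS1 := hσrec 1 (by omega) (by omega)
    rw [show (1:ℕ) - 1 = 0 from rfl, hσ0, hc1, hσ1] at hS1
    have hσ2 : b 1 * σ 2 = b 1 + 2 * a 1 := by linear_combination hS1 - hk1
    have hσ2gt : 1 < σ 2 := by nlinarith
    have h2 := heps 2 (by omega) (by omega)
    rw [show (2:ℕ) - 1 = 1 from rfl] at h2
    have hρ2 : ρ 2 = ρ 1 := by
      rcases mul_eq_zero.mp (show (σ 2 + σ 1) * (ρ 2 - ρ 1) = 0 by linear_combination h2)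
        with h' | h'
      · rw [hσ1] at h'; linarith
      · linarith
    have h3 := heps 3 (by omega) (by omega)
    rw [show (3:ℕ) - 1 = 2 from rfl] at h3
    rcases mul_eq_zero.mp (show (σ 3 + σ 2) * (ρ 3 - ρ 2) = 0 by linear_combination h3)
      with h' | h'
    · have hS2 := hσrec 2 (by omega) (by omega)
      rw [show (2:ℕ) - 1 = 1 from rfl] at hS2
      have hσ3 : σ 3 = -σ 2 := by linarith
      rw [hσ1, hσ3] at hS2
      nlinarith [hS2, hsum2,
        mul_pos (show (0:ℝ) < 2 * a 2 + c 2 by linarith)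
          (show (0:ℝ) < σ 2 - 1 by linarith)]
    · have hR2 := hρrec 2 (by omega) (by omega)
      rw [show (2:ℕ) - 1 = 1 from rfl] at hR2
      have hR1 := hρrec 1 (by omega) (by omega)
      rw [show (1:ℕ) - 1 = 0 from rfl, hρ0, hc1] at hR1
      have hρ3 : ρ 3 = ρ 1 := by rw [hρ2] at h'; linarith
      rw [hρ3, hρ2] at hR2
      rw [hρ2] at hR1
      exact hρnt (by linear_combination -hR1 + hR2 - ρ 1 * hsum2 + ρ 1 * hk1)
  -- main induction
  have hu : k * (σ 1 - 1) ≠ 0 := mul_ne_zero (ne_of_gt hk) (sub_ne_zero.mpr hσnt)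
  have hv : k * (ρ 1 - 1) ≠ 0 := mul_ne_zero (ne_of_gt hk) (sub_ne_zero.mpr hρnt)
  have hP2 : k * (σ 1 - 1) * (k * (ρ 1 - 1)) + k * (k * (σ 1 - 1) + k * (ρ 1 - 1))
      + ε * k * (k * (σ 1 - 1) - k * (ρ 1 - 1)) = 0 := by
    linear_combination k ^ 2 * hT1
  have main : ∀ n, n + 1 ≤ D → σ n ≠ σ (n + 1) ∧ ρ n ≠ ρ (n + 1) := by
    intro n
    induction n with
    | zero =>
      intro _
      constructor
      · rw [hσ0]; exact fun h => hσnt h.symm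
      · rw [hρ0]; exact fun h => hρnt h.symm
    | succ m IH =>
      intro hle
      obtain ⟨IHσ, IHρ⟩ := IH (by omega)
      have hci : 0 < c (m + 1) := hcpos (m + 1) (by omega) (by omega)
      have hrS := hσrec (m + 1) (by omega) (by omega)
      have hrR := hρrec (m + 1) (by omega) (by omega)
      rw [show m + 1 - 1 = m from rfl] at hrS hrR
      have hsumi := hsum (m + 1) (by omega)
      have hcki := hck (m + 1) (by omega) (by omega)
      have hT := heps (m + 2) (by omega) (by omega)
      rw [show m + 2 - 1 = m + 1 from rfl] at hT
      -- non-degeneracy claims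
      have hA : σ (m + 1) = σ (m + 2) → σ (m + 1) ≠ 0 := by
        intro heq h0
        rw [← heq, h0] at hrS
        have : σ m = 0 := by
          have hcm : c (m + 1) * σ m = 0 := by linear_combination hrS
          exact (mul_eq_zero.mp hcm).resolve_left (ne_of_gt hci)
        exact IHσ (by rw [this, h0])
      have hB : ρ (m + 1) = ρ (m + 2) → ρ (m + 1) ≠ 0 := by
        intro heq h0
        rw [← heq, h0] at hrR
        have : ρ m = 0 := by
          have hcm : c (m + 1) * ρ m = 0 := by linear_combination hrR
          exact (mul_eq_zero.mp hcm).resolve_left (ne_of_gt hci)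
        exact IHρ (by rw [this, h0])
      have hC : σ (m + 1) = σ (m + 2) → ρ (m + 1) = ρ (m + 2) →
          σ (m + 1) ≠ 0 → ρ (m + 1) ≠ 0 → False := by
        intro heqσ heqρ hs0 hr0
        have hTi := heps (m + 1) (by omega) (by omega)
        rw [show m + 1 - 1 = m from rfl] at hTi
        rw [← heqσ] at hrS
        rw [← heqρ] at hrR
        have h1 : c (m + 1) * σ m = σ (m + 1) * (k * (σ 1 - 1) + c (m + 1)) := by
          linear_combination hrS - σ (m + 1) * hsumi
        have h2 : c (m + 1) * ρ m = ρ (m + 1) * (k * (ρ 1 - 1) + c (m + 1)) := by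
          linear_combination hrR - ρ (m + 1) * hsumi
        have e1 : σ (m + 1) * ρ (m + 1) *
            (k * (σ 1 - 1) * (k * (ρ 1 - 1))
              + c (m + 1) * (k * (σ 1 - 1) + k * (ρ 1 - 1))
              + ε * c (m + 1) * (k * (σ 1 - 1) - k * (ρ 1 - 1))) = 0 := by
          linear_combination (-(c (m + 1) ^ 2)) * hTi
            + (-(ε * c (m + 1) * ρ (m + 1)) - c (m + 1) * ρ m) * h1
            + (-(σ (m + 1) * (k * (σ 1 - 1) + c (m + 1))) + ε * c (m + 1) * σ (m + 1)) * h2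
        have hP1 : k * (σ 1 - 1) * (k * (ρ 1 - 1))
            + c (m + 1) * (k * (σ 1 - 1) + k * (ρ 1 - 1))
            + ε * c (m + 1) * (k * (σ 1 - 1) - k * (ρ 1 - 1)) = 0 :=
          (mul_eq_zero.mp e1).resolve_left (mul_ne_zero hs0 hr0)
        have hlin : (k * (σ 1 - 1) + k * (ρ 1 - 1))
            + ε * (k * (σ 1 - 1) - k * (ρ 1 - 1)) = 0 := by
          have hkc : (k - c (m + 1)) * ((k * (σ 1 - 1) + k * (ρ 1 - 1))
              + ε * (k * (σ 1 - 1) - k * (ρ 1 - 1))) = 0 := by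
            linear_combination hP2 - hP1
          exact (mul_eq_zero.mp hkc).resolve_left (by linarith)
        have huv : k * (σ 1 - 1) * (k * (ρ 1 - 1)) = 0 := by
          linear_combination hP2 - k * hlin
        rcases mul_eq_zero.mp huv with h' | h'
        · exact hu h'
        · exact hv h'
      constructor
      · intro heq
        have hs0 := hA heq
        have hd : (1 - ε) * (σ (m + 1) * (ρ (m + 2) - ρ (m + 1))) = 0 := by
          rw [← heq] at hT
          linear_combination hT
        have hρeq : ρ (m + 1) = ρ (m + 2) := by
          rcases mul_eq_zero.mp hd with h' | h'
          · exact absurd (by linarith : ε = 1) hε1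
          · rcases mul_eq_zero.mp h' with h'' | h''
            · exact absurd h'' hs0
            · linarith
        exact hC heq hρeq hs0 (hB hρeq)
      · intro heq
        have hr0 := hB heq
        have hd : (1 + ε) * (ρ (m + 1) * (σ (m + 2) - σ (m + 1))) = 0 := by
          rw [← heq] at hT
          linear_combination hT
        have hσeq : σ (m + 1) = σ (m + 2) := by
          rcases mul_eq_zero.mp hd with h' | h'
          · exact absurd (by linarith : ε = -1) hε2
          · rcases mul_eq_zero.mp h' with h'' | h''
            · exact absurd h'' hr0
            · linarith
        exact hC hσeq heq (hA hσeq) hr0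
  refine ⟨hε1, hε2, ?_⟩
  intro i hi1 hiD
  obtain ⟨n, rfl⟩ : ∃ n, i = n + 1 := ⟨i - 1, by omega⟩
  rw [show n + 1 - 1 = n from rfl]
  exact main n hiD
end

section
/- Suppose a_i = 0 for 0 ≤ i ≤ D−2 and a_{D−1} ≠ 0, and let σ₀,…,σ_D be the pseudo cosine sequence for θ = −k. Then σ_i = (−1)^i for 0 ≤ i ≤ D−1, and (−1)^D σ_D = 1 + 2a_{D−1}/b_{D−1}. -/
/-- Suppose a_i = 0 for 0 ≤ i ≤ D−2 and a_{D−1} ≠ 0, and let σ be the pseudo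
cosine sequence for θ = −k.  Then σ_i = (−1)^i for 0 ≤ i ≤ D−1 and
(−1)^D σ_D = 1 + 2 a_{D−1}/b_{D−1}. -/
theorem pcs_for_minus_k (D : ℕ) (hD : 3 ≤ D) (k : ℝ) (a b c : ℕ → ℝ)
    (hk : 0 < k) (hb0 : b 0 = k) (ha0 : a 0 = 0) (hc1 : c 1 = 1)
    (hsum : ∀ i, i ≤ D → c i + a i + b i = k)
    (hapos : ∀ i, i ≤ D → 0 ≤ a i)
    (hbpos : ∀ i, i ≤ D - 1 → 0 < b i)
    (hcpos : ∀ i, 1 ≤ i → i ≤ D → 0 < c i)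
    (ha' : ∀ i, i ≤ D - 2 → a i = 0) (haD : a (D - 1) ≠ 0)
    (σ : ℕ → ℝ) (hσ0 : σ 0 = 1) (hσ1 : k * σ 1 = -k)
    (hrec : ∀ i, 1 ≤ i → i ≤ D - 1 →
      c i * σ (i - 1) + a i * σ i + b i * σ (i + 1) = -k * σ i) :
    (∀ i, i ≤ D - 1 → σ i = (-1 : ℝ) ^ i) ∧
    (-1 : ℝ) ^ D * σ D = 1 + 2 * a (D - 1) / b (D - 1) := by
  have hkne : k ≠ 0 := ne_of_gt hk
  have hs1 : σ 1 = -1 := by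
    have h : k * σ 1 = k * (-1) := by linarith
    exact mul_left_cancel₀ hkne h
  have key : ∀ i, i ≤ D - 1 → σ i = (-1 : ℝ) ^ i := by
    intro i
    induction i using Nat.strong_induction_on with
    | _ i ih =>
      match i with
      | 0 => intro _; simpa using hσ0
      | 1 => intro _; simpa using hs1
      | (j+2) =>
        intro hle
        have hj : σ j = (-1 : ℝ) ^ j := ih j (by omega) (by omega)
        have hj1 : σ (j+1) = (-1 : ℝ) ^ (j+1) := ih (j+1) (by omega) (by omega)
        have ha : a (j+1) = 0 := ha' (j+1) (by omega)
        have hcb : c (j+1) + a (j+1) + b (j+1) = k := hsum (j+1) (by omega)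
        have hb : 0 < b (j+1) := hbpos (j+1) (by omega)
        have hr : c (j+1) * σ j + a (j+1) * σ (j+1) + b (j+1) * σ (j+2)
            = -k * σ (j+1) := hrec (j+1) (by omega) (by omega)
        rw [hj, hj1] at hr
        have hexp : b (j+1) * σ (j+2) = b (j+1) * (-1 : ℝ) ^ (j+2) := by
          linear_combination hr - (-1 : ℝ) ^ j * hcb + 2 * (-1 : ℝ) ^ j * ha
        exact mul_left_cancel₀ (ne_of_gt hb) hexp
  refine ⟨key, ?_⟩
  have hr : c (D-1) * σ (D-1-1) + a (D-1) * σ (D-1) + b (D-1) * σ (D-1+1)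
      = -k * σ (D-1) := hrec (D-1) (by omega) (by omega)
  rw [show D - 1 - 1 = D - 2 by omega, show D - 1 + 1 = D by omega] at hr
  have h2 : σ (D-2) = (-1 : ℝ) ^ (D-2) := key (D-2) (by omega)
  have h1 : σ (D-1) = (-1 : ℝ) ^ (D-1) := key (D-1) (by omega)
  have hcb : c (D-1) + a (D-1) + b (D-1) = k := hsum (D-1) (by omega)
  have hb : 0 < b (D-1) := hbpos (D-1) (by omega)
  have e2 : ((-1 : ℝ)) ^ (D-1) = (-1) ^ (D-2) * (-1) := by
    rw [← pow_succ]; congr 1; omega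
  have eD : ((-1 : ℝ)) ^ D = (-1) ^ (D-2) := by
    rw [show D = D - 2 + 2 by omega, pow_add]; norm_num
  have hsq : ((-1 : ℝ)) ^ (D-2) * (-1) ^ (D-2) = 1 := by
    rw [← pow_add, Even.neg_one_pow]; exact ⟨D-2, by ring⟩
  rw [h1, h2, e2] at hr
  have hσD : b (D-1) * σ D = (-1 : ℝ) ^ (D-2) * (b (D-1) + 2 * a (D-1)) := by
    linear_combination hr - (-1 : ℝ) ^ (D-2) * hcb
  rw [eD]
  field_simp
  linear_combination ((-1 : ℝ) ^ (D-2)) * hσD + (b (D-1) + 2 * a (D-1)) * hsq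
end

section
/- Suppose a₁ = 0 and there exists i with 2 ≤ i ≤ D−2 such that a_i ≠ 0 (so D ≥ 4). If θ, θ′ is a tight pair of real numbers with θ ≠ k and θ′ ≠ k, a contradiction follows; hence the only tight pairs are those of the form (θ, k). -/
/-- The canonical pseudo cosine sequence with `σ 1 = θ/k`. -/
noncomputable def pcs (k θ : ℝ) (a b c : ℕ → ℝ) : ℕ → ℝ
  | 0 => 1
  | 1 => θ / k
  | (n+2) => (θ * pcs k θ a b c (n+1) - c (n+1) * pcs k θ a b c n
      - a (n+1) * pcs k θ a b c (n+1)) / b (n+1)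

lemma pcs_one {k : ℝ} (θ : ℝ) (a b c : ℕ → ℝ) (hk : k ≠ 0) :
    k * pcs k θ a b c 1 = θ := by
  show k * (θ / k) = θ
  field_simp

lemma pcs_isPCS (D : ℕ) {k : ℝ} (θ : ℝ) (a b c : ℕ → ℝ) (hk : k ≠ 0)
    (hb : ∀ i, 1 ≤ i → i ≤ D - 1 → b i ≠ 0) :
    IsPCS D k a b c (pcs k θ a b c) := by
  constructor
  · rfl
  · intro i h1 h2
    obtain ⟨n, rfl⟩ : ∃ n, i = n + 1 := ⟨i - 1, by omega⟩
    have hbne := hb (n+1) h1 h2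
    have hrec : pcs k θ a b c (n+2) = (θ * pcs k θ a b c (n+1) - c (n+1) * pcs k θ a b c n
      - a (n+1) * pcs k θ a b c (n+1)) / b (n+1) := rfl
    have hidx : n + 1 - 1 = n := rfl
    rw [hidx, hrec, mul_div_cancel₀ _ hbne]
    linear_combination (-(pcs k θ a b c (n+1))) * pcs_one θ a b c hk

lemma tight_symm {D : ℕ} {k : ℝ} {a b c : ℕ → ℝ} {θ θ' : ℝ}
    (h : Tight D k a b c θ θ') : Tight D k a b c θ' θ := by
  intro σ ρ h1 h2 h3 h4
  have h5 := h ρ σ h3 h4 h1 h2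
  have he : (fun i => ρ i * σ i) = fun i => σ i * ρ i := funext fun i => mul_comm _ _
  rwa [he] at h5

/-- The key case: `θ = -k` cannot be part of a tight pair (with `θ' ≠ k`). -/
lemma neg_case (D : ℕ) (hD : 4 ≤ D) (k : ℝ) (a b c : ℕ → ℝ)
    (hk : 0 < k) (hc1 : c 1 = 1)
    (hsum : ∀ i, i ≤ D → c i + a i + b i = k)
    (hapos : ∀ i, i ≤ D → 0 ≤ a i)
    (hbpos : ∀ i, i ≤ D - 1 → 0 < b i)
    (hcpos : ∀ i, 1 ≤ i → i ≤ D → 0 < c i)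
    (ha1 : a 1 = 0)
    (hi : ∃ i, 2 ≤ i ∧ i ≤ D - 2 ∧ a i ≠ 0)
    (θ' : ℝ) (hθ' : θ' ≠ k) (hT : Tight D k a b c (-k) θ') : False := by
  classical
  have hkne : k ≠ 0 := hk.ne'
  have hbne : ∀ i, 1 ≤ i → i ≤ D - 1 → b i ≠ 0 := fun i h1 h2 => (hbpos i h2).ne'
  set σ : ℕ → ℝ := pcs k (-k) a b c with hσdef
  set ρ : ℕ → ℝ := pcs k θ' a b c with hρdef
  have hσ : IsPCS D k a b c σ := pcs_isPCS D (-k) a b c hkne hbne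
  have hρ : IsPCS D k a b c ρ := pcs_isPCS D θ' a b c hkne hbne
  have hkσ : k * σ 1 = -k := pcs_one (-k) a b c hkne
  have hkρ : k * ρ 1 = θ' := pcs_one θ' a b c hkne
  have hγ : IsPCS D k a b c (fun i => σ i * ρ i) := hT σ ρ hσ hkσ hρ hkρ
  have hσ1val : σ 1 = -1 := by
    show (-k) / k = -1
    rw [neg_div, div_self hkne]
  have hγ1 : k * (σ 1 * ρ 1) = -θ' := by
    rw [hσ1val]; linear_combination -hkρ
  -- minimal index j with 2 ≤ j and a j ≠ 0
  have hex : ∃ i, 2 ≤ i ∧ a i ≠ 0 := by obtain ⟨i, h2, _, h3⟩ := hi; exact ⟨i, h2, h3⟩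
  obtain ⟨j, hj2, haj, hjD, hminj⟩ :
      ∃ j, 2 ≤ j ∧ a j ≠ 0 ∧ j ≤ D - 2 ∧ ∀ m, m < j → ¬(2 ≤ m ∧ a m ≠ 0) := by
    refine ⟨Nat.find hex, (Nat.find_spec hex).1, (Nat.find_spec hex).2, ?_,
      fun m hm => Nat.find_min hex hm⟩
    obtain ⟨i, h2, h3, h4⟩ := hi
    exact le_trans (Nat.find_min' hex ⟨h2, h4⟩) h3
  have hamin : ∀ m, 1 ≤ m → m < j → a m = 0 := by
    intro m h1 h2
    rcases Nat.lt_or_ge m 2 with h' | h'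
    · have : m = 1 := by omega
      rw [this]; exact ha1
    · by_contra hne
      exact hminj m h2 ⟨h', hne⟩
  obtain ⟨m, rfl⟩ : ∃ m, j = m + 1 := ⟨j - 1, by omega⟩
  -- σ n = (-1)^n for n ≤ j
  have key : ∀ n, n + 1 ≤ m + 1 → σ n = (-1)^n ∧ σ (n+1) = (-1)^(n+1) := by
    intro n
    induction n with
    | zero =>
      intro _
      refine ⟨hσ.1, ?_⟩
      rw [hσ1val]; ring
    | succ n ih =>
      intro h
      obtain ⟨h1, h2⟩ := ih (by omega)
      refine ⟨h2, ?_⟩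
      have han : a (n+1) = 0 := hamin (n+1) (by omega) (by omega)
      have heq := hσ.2 (n+1) (by omega) (by omega)
      rw [Nat.add_sub_cancel] at heq
      rw [h1, h2, hkσ] at heq
      have hs := hsum (n+1) (by omega)
      have hbpp := hbpos (n+1) (by omega)
      have hbn : b (n+1) ≠ 0 := hbpp.ne'
      have : b (n+1) * σ (n+2) = b (n+1) * (-1)^(n+2) := by
        linear_combination heq - ((-1:ℝ))^n * hs + (2*((-1:ℝ))^n) * han
      exact mul_left_cancel₀ hbn this
  have hm0 : σ m = (-1:ℝ)^m := (key m le_rfl).1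
  set E : ℝ := (-1:ℝ)^m with hEdef
  have hm1 : σ (m+1) = -E := by
    rw [(key m le_rfl).2, pow_succ]; ring
  have hE : E ≠ 0 := pow_ne_zero _ (by norm_num)
  -- abbreviations
  have hA : 0 < a (m+1) := lt_of_le_of_ne (hapos (m+1) (by omega)) (Ne.symm haj)
  have hBj : 0 < b (m+1) := hbpos (m+1) (by omega)
  have hC' : 0 < c (m+2) := hcpos (m+2) (by omega) (by omega)
  have hA' : 0 ≤ a (m+2) := hapos (m+2) (by omega)
  have hB' : 0 < b (m+2) := hbpos (m+2) (by omega)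
  have hs1 : c (m+1) + a (m+1) + b (m+1) = k := hsum (m+1) (by omega)
  have hs2 : c (m+2) + a (m+2) + b (m+2) = k := hsum (m+2) (by omega)
  -- the six equation instances
  have hSσ1 := hσ.2 (m+1) (by omega) (by omega)
  have hSσ2 := hσ.2 (m+2) (by omega) (by omega)
  have hRρ1 := hρ.2 (m+1) (by omega) (by omega)
  have hRρ2 := hρ.2 (m+2) (by omega) (by omega)
  have hG1 := hγ.2 (m+1) (by omega) (by omega)
  have hG2 := hγ.2 (m+2) (by omega) (by omega)
  simp only [Nat.add_sub_cancel] at hSσ1 hSσ2 hRρ1 hRρ2 hG1 hG2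
  have hidx2 : m + 2 - 1 = m + 1 := rfl
  rw [hidx2] at hSσ2 hRρ2 hG2

  rw [hm0, hm1, hkσ] at hSσ1
  rw [hm1, hkσ] at hSσ2
  rw [hkρ] at hRρ1
  rw [hkρ] at hRρ2
  rw [hm0, hm1, hγ1] at hG1
  rw [hm1, hγ1] at hG2
  -- derived identities
  have hW : b (m+1) * σ (m+2) = (2 * a (m+1) + b (m+1)) * E := by
    linear_combination hSσ1 - E * hs1
  have hstep1 : 2 * a (m+1) * E * (ρ (m+2) - ρ (m+1)) = 0 := by
    linear_combination (-E) * hRρ1 + hG1 - ρ (m+2) * hW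
  have hP21 : ρ (m+2) = ρ (m+1) := by
    have h2AE : 2 * a (m+1) * E ≠ 0 :=
      mul_ne_zero (mul_ne_zero two_ne_zero hA.ne') hE
    have := (mul_eq_zero.mp hstep1).resolve_left h2AE
    linarith [sub_eq_zero.mp this]
  have hstar : c (m+2) * (-E + σ (m+2)) + 2 * a (m+2) * σ (m+2)
      + b (m+2) * (σ (m+2) + σ (m+3)) = 0 := by
    linear_combination hSσ2 + σ (m+2) * hs2
  have hdstar : c (m+2) * ρ (m+1) * (-E + σ (m+2)) + 2 * a (m+2) * σ (m+2) * ρ (m+2)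
      + b (m+2) * ρ (m+3) * (σ (m+2) + σ (m+3)) = 0 := by
    linear_combination σ (m+2) * hRρ2 + hG2
  have hI : c (m+2) * (-E + σ (m+2)) * (ρ (m+2) - ρ (m+1))
      + b (m+2) * (σ (m+2) + σ (m+3)) * (ρ (m+2) - ρ (m+3)) = 0 := by
    linear_combination ρ (m+2) * hstar - hdstar
  have hII : c (m+2) * (-E) * (ρ (m+2) - ρ (m+1))
      + b (m+2) * σ (m+3) * (ρ (m+2) - ρ (m+3)) = (θ' - k) * σ (m+2) * ρ (m+2) := by
    linear_combination ρ (m+2) * hSσ2 - hG2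
  have hkey2 : b (m+1) * b (m+2) * (σ (m+2) + σ (m+3))
      = -2 * E * (a (m+1) * c (m+2) + a (m+2) * (2 * a (m+1) + b (m+1))) := by
    linear_combination b (m+1) * hstar - (c (m+2) + 2 * a (m+2)) * hW
  have hpos : 0 < a (m+1) * c (m+2) + a (m+2) * (2 * a (m+1) + b (m+1)) := by
    have h1 : 0 < a (m+1) * c (m+2) := mul_pos hA hC'
    have h2 : 0 ≤ a (m+2) * (2 * a (m+1) + b (m+1)) :=
      mul_nonneg hA' (by linarith)
    linarith
  have hS23 : σ (m+2) + σ (m+3) ≠ 0 := by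
    intro h
    rw [h] at hkey2
    have : (-2) * E * (a (m+1) * c (m+2) + a (m+2) * (2 * a (m+1) + b (m+1))) ≠ 0 :=
      mul_ne_zero (mul_ne_zero (by norm_num) hE) hpos.ne'
    exact this (by linarith [hkey2])
  have hP23 : ρ (m+2) = ρ (m+3) := by
    have hfac : b (m+2) * ((σ (m+2) + σ (m+3)) * (ρ (m+2) - ρ (m+3))) = 0 := by
      linear_combination hI - c (m+2) * (-E + σ (m+2)) * hP21
    have := (mul_eq_zero.mp hfac).resolve_left hB'.ne'
    have := (mul_eq_zero.mp this).resolve_left hS23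
    linarith [sub_eq_zero.mp this]
  have hfin : (θ' - k) * (σ (m+2) * ρ (m+2)) = 0 := by
    linear_combination -hII - c (m+2) * E * hP21 + b (m+2) * σ (m+3) * hP23
  have hS2ne : σ (m+2) ≠ 0 := by
    intro h
    rw [h, mul_zero] at hW
    have : (2 * a (m+1) + b (m+1)) * E ≠ 0 :=
      mul_ne_zero (by positivity) hE
    exact this hW.symm
  have hθ'ne : θ' - k ≠ 0 := sub_ne_zero.mpr hθ'
  have hP2z : ρ (m+2) = 0 := by
    have := (mul_eq_zero.mp hfin).resolve_left hθ'ne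
    exact (mul_eq_zero.mp this).resolve_left hS2ne
  have hP1z : ρ (m+1) = 0 := by rw [← hP21]; exact hP2z
  -- backwards induction: all ρ's vanish
  have hzero : ∀ t, t ≤ m + 1 → ρ (m + 1 - t) = 0 ∧ ρ (m + 2 - t) = 0 := by
    intro t
    induction t with
    | zero => intro _; exact ⟨hP1z, hP2z⟩
    | succ t ih =>
      intro ht
      obtain ⟨h1, h2⟩ := ih (by omega)
      have hi1 : 1 ≤ m + 1 - t := by omega
      have heq := hρ.2 (m + 1 - t) hi1 (by omega)
      have hiia : m + 1 - t + 1 = m + 2 - t := by omega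
      rw [hiia, h1, h2, hkρ] at heq
      have hcne : c (m + 1 - t) ≠ 0 := (hcpos (m+1-t) hi1 (by omega)).ne'
      have hprev : ρ (m + 1 - t - 1) = 0 := by
        have : c (m + 1 - t) * ρ (m + 1 - t - 1) = c (m+1-t) * 0 := by
          linear_combination heq
        exact mul_left_cancel₀ hcne this
      constructor
      · have : m + 1 - (t + 1) = m + 1 - t - 1 := by omega
        rw [this]; exact hprev
      · have : m + 2 - (t + 1) = m + 1 - t := by omega
        rw [this]; exact h1
  have h0 := (hzero (m+1) le_rfl).1
  rw [Nat.sub_self] at h0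
  rw [hρ.1] at h0
  exact one_ne_zero h0

/-- Suppose a₁ = 0 and a_i ≠ 0 for some 2 ≤ i ≤ D−2 (so D ≥ 4).  Then every
tight pair θ, θ' has θ = k or θ' = k: the only tight pairs are those with k. -/
theorem case_three_tight_pairs (D : ℕ) (hD : 4 ≤ D) (k : ℝ) (a b c : ℕ → ℝ)
    (hk : 0 < k) (hb0 : b 0 = k) (ha0 : a 0 = 0) (hc1 : c 1 = 1)
    (hsum : ∀ i, i ≤ D → c i + a i + b i = k)
    (hapos : ∀ i, i ≤ D → 0 ≤ a i)
    (hbpos : ∀ i, i ≤ D - 1 → 0 < b i)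
    (hcpos : ∀ i, 1 ≤ i → i ≤ D → 0 < c i)
    (ha1 : a 1 = 0)
    (hi : ∃ i, 2 ≤ i ∧ i ≤ D - 2 ∧ a i ≠ 0) :
    ∀ θ θ' : ℝ, Tight D k a b c θ θ' → θ = k ∨ θ' = k := by
  intro θ θ' hT
  by_contra hcon
  push_neg at hcon
  obtain ⟨hθ, hθ'⟩ := hcon
  have hkne : k ≠ 0 := hk.ne'
  have hbne : ∀ i, 1 ≤ i → i ≤ D - 1 → b i ≠ 0 := fun i h1 h2 => (hbpos i h2).ne'
  set σ : ℕ → ℝ := pcs k θ a b c with hσdef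
  set ρ : ℕ → ℝ := pcs k θ' a b c with hρdef
  have hσ : IsPCS D k a b c σ := pcs_isPCS D θ a b c hkne hbne
  have hρ : IsPCS D k a b c ρ := pcs_isPCS D θ' a b c hkne hbne
  have hkσ : k * σ 1 = θ := pcs_one θ a b c hkne
  have hkρ : k * ρ 1 = θ' := pcs_one θ' a b c hkne
  have hγ : IsPCS D k a b c (fun i => σ i * ρ i) := hT σ ρ hσ hkσ hρ hkρ
  have hb1 : b 1 = k - 1 := by have := hsum 1 (by omega); linarith
  have hk1pos : 0 < k - 1 := hb1 ▸ hbpos 1 (by omega)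
  have hσe := hσ.2 1 le_rfl (by omega)
  have hρe := hρ.2 1 le_rfl (by omega)
  have hγe := hγ.2 1 le_rfl (by omega)
  have hidx : (1 : ℕ) - 1 = 0 := rfl
  rw [hidx] at hσe hρe hγe
  simp only [show (1:ℕ)+1 = 2 from rfl] at hσe hρe hγe
  rw [hc1, ha1, hb1, hσ.1] at hσe
  rw [hc1, ha1, hb1, hρ.1] at hρe
  rw [hc1, ha1, hb1, hσ.1, hρ.1] at hγe
  have E1 : k + k*(k-1)*(σ 2) = θ^2 := by
    linear_combination k * hσe + (θ + k * σ 1) * hkσ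
  have E2 : k + k*(k-1)*(ρ 2) = θ'^2 := by
    linear_combination k * hρe + (θ' + k * ρ 1) * hkρ
  have E3 : k^3 + k^3*(k-1)*(σ 2 * ρ 2) = θ^2 * θ'^2 := by
    linear_combination k^3 * hγe + (k^2 * σ 1 * ρ 1 + θ * θ') * (k * ρ 1) * hkσ
      + (k^2 * σ 1 * ρ 1 + θ * θ') * θ * hkρ
  have h1 : (θ^2 - k^2) * (θ'^2 - k^2) = k^2*(k-1)^2*((σ 2 - 1)*(ρ 2 - 1)) := by
    linear_combination (k^2 - θ^2) * E2 - k*(k-1)*(ρ 2 - 1) * E1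
  have h2 : (θ^2 - k^2) * (θ'^2 - k^2) = k^3*(k-1)*((σ 2 - 1)*(ρ 2 - 1)) := by
    linear_combination k^2 * E1 + k^2 * E2 - E3
  have h3 : k^2*(k-1)*((σ 2 - 1)*(ρ 2 - 1)) = 0 := by
    linear_combination h1 - h2
  have hkkne : k^2*(k-1) ≠ 0 := mul_ne_zero (pow_ne_zero 2 hkne) hk1pos.ne'
  have hP : (σ 2 - 1)*(ρ 2 - 1) = 0 := (mul_eq_zero.mp h3).resolve_left hkkne
  rcases mul_eq_zero.mp hP with hS | hR
  · -- θ² = k², so θ = -k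
    have hθθ : (θ - k) * (θ + k) = 0 := by
      linear_combination -E1 + k*(k-1) * hS
    rcases mul_eq_zero.mp hθθ with h | h
    · exact hθ (by linarith [sub_eq_zero.mp h])
    · have hθv : θ = -k := by linarith
      rw [hθv] at hT
      exact absurd hT (fun hT' => neg_case D hD k a b c hk hc1 hsum hapos hbpos hcpos ha1 hi θ' hθ' hT')
  · have hθθ : (θ' - k) * (θ' + k) = 0 := by
      linear_combination -E2 + k*(k-1) * hR
    rcases mul_eq_zero.mp hθθ with h | h
    · exact hθ' (by linarith [sub_eq_zero.mp h])
    · have hθv : θ' = -k := by linarith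
      have hT2 := tight_symm hT
      rw [hθv] at hT2
      exact absurd hT2 (fun hT' => neg_case D hD k a b c hk hc1 hsum hapos hbpos hcpos ha1 hi θ hθ hT')
end

section
/- Suppose a₁ ≠ 0, σ₀,…,σ_D is a feasible (tight, with σ_{i−1} ≠ σ_{i+1} for 1 ≤ i ≤ D−1) pseudo cosine sequence, and ρ₀,…,ρ_D is a nontrivial pseudo cosine sequence such that σ and ρ form a tight pair with auxiliary parameter ε. Then ρ_i = ∏_{j=1}^{i} (σ_{j−1}−εσ_j)/(σ_j−εσ_{j−1}) for 0 ≤ i ≤ D, and all denominators σ_j − εσ_{j−1} are nonzero. -/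
/-- A pseudo cosine sequence cannot have two consecutive zeros (in range). -/
lemma pcs_no_consecutive_zeros (D : ℕ) (k : ℝ) (a b c σ : ℕ → ℝ)
    (hσ0 : σ 0 = 1)
    (hrec : ∀ i, 1 ≤ i → i ≤ D - 1 →
      c i * σ (i - 1) + a i * σ i + b i * σ (i + 1) = k * σ 1 * σ i)
    (hcpos : ∀ i, 1 ≤ i → i ≤ D → 0 < c i) :
    ∀ m, m ≤ D - 1 → σ m = 0 → σ (m + 1) = 0 → False := by
  intro m
  induction m with
  | zero => intro _ h0 _; rw [hσ0] at h0; exact one_ne_zero h0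
  | succ n ih =>
    intro hm h1 h2
    have hr := hrec (n + 1) (by omega) hm
    simp only [Nat.add_sub_cancel] at hr
    rw [h1, h2] at hr
    have hc := hcpos (n + 1) (by omega) (by omega)
    have h3 : c (n + 1) * σ n = 0 := by linarith
    have h4 : σ n = 0 := by
      rcases mul_eq_zero.mp h3 with h | h
      · exact absurd h hc.ne'
      · exact h
    exact ih (by omega) h4 h1

set_option maxHeartbeats 1000000 in
/-- a₁ ≠ 0; σ a feasible pseudo cosine sequence (tight, with σ_{i−1} ≠ σ_{i+1}
for 1 ≤ i ≤ D−1); ρ a nontrivial pseudo cosine sequence forming with σ a tight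
pair with auxiliary parameter ε.  Then all denominators σ_j − εσ_{j−1} are
nonzero and ρ_i = ∏_{j=1}^{i} (σ_{j−1}−εσ_j)/(σ_j−εσ_{j−1}) for 0 ≤ i ≤ D. -/
theorem rho_product_formula (D : ℕ) (hD : 3 ≤ D) (k : ℝ) (a b c : ℕ → ℝ)
    (hk : 0 < k) (hb0 : b 0 = k) (ha0 : a 0 = 0) (hc1 : c 1 = 1)
    (hsum : ∀ i, i ≤ D → c i + a i + b i = k)
    (hapos : ∀ i, i ≤ D → 0 ≤ a i)
    (hbpos : ∀ i, i ≤ D - 1 → 0 < b i)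
    (hcpos : ∀ i, 1 ≤ i → i ≤ D → 0 < c i)
    (hck : ∀ i, 1 ≤ i → i ≤ D → c i < k)
    (ha1 : a 1 ≠ 0)
    (σ ρ : ℕ → ℝ) (ε : ℝ)
    (hσ : IsPCS D k a b c σ) (hσnt : σ 1 ≠ 1)
    (hfeas : ∀ i, 1 ≤ i → i ≤ D - 1 → σ (i - 1) ≠ σ (i + 1))
    (hρ : IsPCS D k a b c ρ) (hρnt : ρ 1 ≠ 1)
    (heps : ∀ i, 1 ≤ i → i ≤ D →
      σ i * ρ i - σ (i - 1) * ρ (i - 1)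
        = ε * (σ (i - 1) * ρ i - σ i * ρ (i - 1))) :
    (∀ j, 1 ≤ j → j ≤ D → σ j - ε * σ (j - 1) ≠ 0) ∧
    ∀ i, i ≤ D →
      ρ i = ∏ j ∈ Finset.range i, (σ j - ε * σ (j + 1)) / (σ (j + 1) - ε * σ j) := by
  obtain ⟨hσ0, hσrec⟩ := hσ
  obtain ⟨hρ0, hρrec⟩ := hρ
  -- the tight relation in product form
  have key : ∀ i, i + 1 ≤ D →
      (σ (i + 1) - ε * σ i) * ρ (i + 1) = (σ i - ε * σ (i + 1)) * ρ i := by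
    intro i hi
    have h := heps (i + 1) (by omega) hi
    simp only [Nat.add_sub_cancel] at h
    linear_combination h
  have hb1 : 0 < b 1 := hbpos 1 (by omega)
  have ha1' : 0 < a 1 := lt_of_le_of_ne (hapos 1 (by omega)) (Ne.symm ha1)
  have hc2 : 0 < c 2 := hcpos 2 (by omega) (by omega)
  have ha2 : 0 ≤ a 2 := hapos 2 (by omega)
  have hs1 := hsum 1 (by omega)
  have hs2 := hsum 2 (by omega)
  -- ε ≠ 1
  have hεne1 : ε ≠ 1 := by
    intro hε; subst hε
    have t1 := key 0 (by omega)
    rw [hσ0, hρ0] at t1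
    have hρ1 : ρ 1 = -1 := by
      have h : (σ 1 - 1) * (ρ 1 + 1) = 0 := by linear_combination t1
      rcases mul_eq_zero.mp h with h' | h'
      · exact absurd (by linarith : σ 1 = 1) hσnt
      · linarith
    have hrr1 := hρrec 1 (by omega) (by omega)
    norm_num [hρ0, hρ1] at hrr1
    have hbρ2 : b 1 * ρ 2 = 2 * a 1 + b 1 := by linear_combination hrr1 - hs1
    have hρ2gt : 1 < ρ 2 := by
      by_contra h; push_neg at h
      nlinarith [mul_le_mul_of_nonneg_left h hb1.le]
    have t2 := key 1 (by omega)
    have hσ21 : σ 2 = σ 1 := by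
      have h : (σ 2 - σ 1) * (ρ 2 + ρ 1) = 0 := by linear_combination t2
      rcases mul_eq_zero.mp h with h' | h'
      · linarith
      · rw [hρ1] at h'; linarith
    have hf := hfeas 2 (by omega) (by omega)
    norm_num at hf
    have t3 := key 2 (by omega)
    have hρ3 : ρ 3 = -ρ 2 := by
      have h : (σ 3 - σ 2) * (ρ 3 + ρ 2) = 0 := by linear_combination t3
      rcases mul_eq_zero.mp h with h' | h'
      · exact absurd (by linarith [hσ21] : σ 1 = σ 3) hf
      · linarith
    have hrr2 := hρrec 2 (by omega) (by omega)
    norm_num [hρ1, hρ3] at hrr2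
    have hfin : (c 2 + 2 * a 2) * ρ 2 = c 2 := by
      linear_combination hrr2 + ρ 2 * hs2
    nlinarith [mul_pos (show (0:ℝ) < c 2 + 2 * a 2 by linarith)
      (show (0:ℝ) < ρ 2 - 1 by linarith)]
  -- ε ≠ -1
  have hεne2 : ε ≠ -1 := by
    intro hε; subst hε
    have t1 := key 0 (by omega)
    rw [hσ0, hρ0] at t1
    have hσ1 : σ 1 = -1 := by
      have h : (σ 1 + 1) * (ρ 1 - 1) = 0 := by linear_combination t1
      rcases mul_eq_zero.mp h with h' | h'
      · linarith
      · exact absurd (by linarith : ρ 1 = 1) hρnt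
    have hsr1 := hσrec 1 (by omega) (by omega)
    norm_num [hσ0, hσ1] at hsr1
    have hbσ2 : b 1 * σ 2 = 2 * a 1 + b 1 := by linear_combination hsr1 - hs1
    have hσ2gt : 1 < σ 2 := by
      by_contra h; push_neg at h
      nlinarith [mul_le_mul_of_nonneg_left h hb1.le]
    have t2 := key 1 (by omega)
    have hρ21 : ρ 2 = ρ 1 := by
      have h : (σ 2 + σ 1) * (ρ 2 - ρ 1) = 0 := by linear_combination t2
      rcases mul_eq_zero.mp h with h' | h'
      · rw [hσ1] at h'; linarith
      · linarith
    have hrr1 := hρrec 1 (by omega) (by omega)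
    norm_num [hρ0, hρ21] at hrr1
    have hkρ1 : k * ρ 1 = -1 := by
      have h : (ρ 1 - 1) * (k * ρ 1 + 1) = 0 := by
        linear_combination -hrr1 + ρ 1 * hs1 + (1 - ρ 1) * hc1
      rcases mul_eq_zero.mp h with h' | h'
      · exact absurd (by linarith : ρ 1 = 1) hρnt
      · linarith
    have hρ1neg : ρ 1 < 0 := by nlinarith
    have hb2 : 0 < b 2 := hbpos 2 (by omega)
    have hrr2 := hρrec 2 (by omega) (by omega)
    norm_num [hρ21] at hrr2
    have hb2ρ3 : b 2 * ρ 3 = -(1 + c 2 + a 2) * ρ 1 := by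
      linear_combination hrr2 + ρ 1 * hkρ1
    have hρ3pos : 0 < ρ 3 := by
      by_contra h; push_neg at h
      nlinarith [mul_nonpos_of_nonneg_of_nonpos hb2.le h,
        mul_pos (show (0:ℝ) < 1 + c 2 + a 2 by linarith) (show (0:ℝ) < -ρ 1 by linarith)]
    have t3 := key 2 (by omega)
    have hσ3 : σ 3 = -σ 2 := by
      have h : (σ 3 + σ 2) * (ρ 3 - ρ 2) = 0 := by linear_combination t3
      rcases mul_eq_zero.mp h with h' | h'
      · linarith
      · rw [hρ21] at h'; linarith
    have hsr2 := hσrec 2 (by omega) (by omega)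
    norm_num [hσ1, hσ3] at hsr2
    have hfin : (c 2 + 2 * a 2) * σ 2 = c 2 := by
      linear_combination hsr2 + σ 2 * hs2
    nlinarith [mul_pos (show (0:ℝ) < c 2 + 2 * a 2 by linarith)
      (show (0:ℝ) < σ 2 - 1 by linarith)]
  -- denominators are nonzero
  have hden : ∀ j, 1 ≤ j → j ≤ D → σ j - ε * σ (j - 1) ≠ 0 := by
    intro j hj1 hjD hzero
    obtain ⟨i, rfl⟩ : ∃ i, j = i + 1 := ⟨j - 1, by omega⟩
    simp only [Nat.add_sub_cancel] at hzero
    have hz : σ (i + 1) = ε * σ i := by linarith [sub_eq_zero.mp hzero]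
    have t := key i (by omega)
    have h0 : (σ i - ε * σ (i + 1)) * ρ i = 0 := by
      linear_combination ρ (i + 1) * hzero - t
    rcases mul_eq_zero.mp h0 with hA | hB
    · -- then σ i (1 - ε²) = 0, so σ i = 0 and σ (i+1) = 0: contradiction
      have hσi : σ i = 0 := by
        have h1 : σ i * (1 - ε ^ 2) = 0 := by linear_combination hA + ε * hzero
        rcases mul_eq_zero.mp h1 with h' | h'
        · exact h'
        · exfalso
          have : (1 - ε) * (1 + ε) = 0 := by linear_combination h'
          rcases mul_eq_zero.mp this with h'' | h''
          · exact hεne1 (by linarith)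
          · exact hεne2 (by linarith)
      have hσi1 : σ (i + 1) = 0 := by rw [hz, hσi, mul_zero]
      exact pcs_no_consecutive_zeros D k a b c σ hσ0 hσrec hcpos i (by omega) hσi hσi1
    · -- ρ i = 0
      rcases Nat.eq_zero_or_pos i with rfl | hi1
      · rw [hρ0] at hB; exact one_ne_zero hB
      · obtain ⟨m, rfl⟩ : ∃ m, i = m + 1 := ⟨i - 1, by omega⟩
        have t' := key m (by omega)
        have h1 : (σ m - ε * σ (m + 1)) * ρ m = 0 := by rw [← t', hB, mul_zero]
        rcases mul_eq_zero.mp h1 with hC | hD'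
        · -- σ m = ε σ (m+1) and σ (m+2) = ε σ (m+1): contradicts feasibility
          have hf := hfeas (m + 1) (by omega) (by omega)
          simp only [Nat.add_sub_cancel] at hf
          exact hf (by linear_combination hC - hz)
        · exact pcs_no_consecutive_zeros D k a b c ρ hρ0 hρrec hcpos m (by omega) hD' hB
  refine ⟨hden, ?_⟩
  intro i
  induction i with
  | zero => intro _; simp [hρ0]
  | succ n ih =>
    intro hn
    rw [Finset.prod_range_succ, ← ih (by omega)]
    have t := key n (by omega)
    have hd := hden (n + 1) (by omega) hn
    simp only [Nat.add_sub_cancel] at hd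
    rw [mul_div_assoc', eq_div_iff hd]
    linear_combination t
end
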